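/- arXiv:2104.12635 — 6 statements merged into one kernel-verified Lean document; each statement's English description precedes it below -/
import Mathlib

section
/- Let (n,m,k,l) be natural numbers with m ≤ n−m, k ≤ n, m+k−n ≤ l and l ≤ min(m,k), and set M := m−l, N := n−m−k+l. Then for every integer x with 0 ≤ x ≤ m the following identity of rational numbers holds (equivalence of the Hahn presentation and the Racah presentation): ∑_{i=0}^{min(M,N)} C(M,i)·C(N,i)·[ ∑_{r=0}^{min(i,x)} ((−i)_r·(−x)_r·(x−n−1)_r)/(r!·(−m)_r·(m−n)_r) ] = C(n−k, m−l) · ∑_{r=0}^{min(x,M,N)} ((−x)_r·(x−n−1)_r·(−M)_r·(−N)_r)/(r!·(−m)_r·(m−n)_r·(−M−N)_r). -/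
open Finset

/-- Rising factorial `(a)_r = a(a+1)⋯(a+r−1)` in `ℚ`. -/
noncomputable def risingFac (a : ℚ) (r : ℕ) : ℚ := ∏ j ∈ Finset.range r, (a + j)

/-- The terminating `₄F₃`-hypergeometric (Racah polynomial) sum
`∑_{r=0}^{min(x,M,N)} ((−x)_r (x−n−1)_r (−M)_r (−N)_r)/(r! (−m)_r (m−n)_r (−M−N)_r)`. -/
noncomputable def racahSum (n m M N x : ℕ) : ℚ :=
  ∑ r ∈ Finset.range (min x (min M N) + 1),
    risingFac (-(x : ℚ)) r * risingFac ((x : ℚ) - n - 1) r * risingFac (-(M : ℚ)) r *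
        risingFac (-(N : ℚ)) r /
      ((r.factorial : ℚ) * risingFac (-(m : ℚ)) r * risingFac ((m : ℚ) - n) r *
        risingFac (-((M : ℚ) + N)) r)

/-!
Expanding the `₃F₂` and exchanging the two summations, the coefficient of the `r`-th term is
`∑ᵢ C(M,i) C(N,i) (−i)_r`. Since `(−i)_r = (−1)^r i(i−1)⋯(i−r+1)` and
`C(M,i) i(i−1)⋯(i−r+1) = M(M−1)⋯(M−r+1) C(M−r,i−r)`, Vandermonde's identity evaluates it to
`(−M)_r C(M+N−r, N−r)`, and `C(M+N−r, N−r) (−M−N)_r = C(M+N, N) (−N)_r`: this is exactly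
`C(M+N, M)` times the `r`-th term of the `₄F₃`.
-/

namespace Nat

theorem choose_add_mul_descFactorial (M r j : ℕ) :
    M.choose (r + j) * (r + j).descFactorial r = M.descFactorial r * (M - r).choose j := by
  rw [descFactorial_eq_factorial_mul_choose, descFactorial_eq_factorial_mul_choose,
    ← mul_assoc, mul_comm _ r !, mul_assoc, choose_mul (le_add_right r j), Nat.add_sub_cancel_left]
  ring

theorem sum_choose_mul_choose_mul_descFactorial {M N r : ℕ} (hr : r ≤ N) :
    ∑ i ∈ range (N + 1), M.choose i * N.choose i * i.descFactorial r
      = M.descFactorial r * (M - r + N).choose (N - r) := by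
  have hsplit : N + 1 = r + (N - r + 1) := by omega
  rw [hsplit, sum_range_add, sum_eq_zero fun i hi => by
    rw [descFactorial_of_lt (mem_range.1 hi), mul_zero], zero_add]
  calc ∑ j ∈ range (N - r + 1), M.choose (r + j) * N.choose (r + j) * (r + j).descFactorial r
      = ∑ j ∈ range (N - r + 1), M.descFactorial r * ((M - r).choose j * N.choose (N - r - j)) :=
        sum_congr rfl fun j hj => by
          rw [mul_right_comm, choose_add_mul_descFactorial,
            ← choose_symm (show r + j ≤ N by have := mem_range.1 hj; omega),
            show N - (r + j) = N - r - j by omega]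
          ring
    _ = M.descFactorial r * (M - r + N).choose (N - r) := by
      rw [← mul_sum, add_choose_eq]
      exact congrArg _ (Finset.Nat.sum_antidiagonal_eq_sum_range_succ
        (fun a b => (M - r).choose a * N.choose b) _).symm

theorem choose_sub_mul_descFactorial {M N r : ℕ} (hr : r ≤ N) :
    (M + N - r).choose (N - r) * (M + N).descFactorial r
      = (M + N).choose N * N.descFactorial r := by
  rw [descFactorial_eq_factorial_mul_choose, descFactorial_eq_factorial_mul_choose,
    mul_left_comm ((M + N).choose N), choose_mul hr]
  ring

end Nat

theorem risingFac_neg_natCast (a r : ℕ) :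
    risingFac (-(a : ℚ)) r = (-1) ^ r * (a.descFactorial r : ℚ) := by
  induction r with
  | zero => simp [risingFac]
  | succ r ih =>
    rw [risingFac, prod_range_succ, ← risingFac, ih, Nat.descFactorial_succ]
    rcases le_or_gt r a with h | h
    · push_cast [Nat.cast_sub h]
      ring
    · simp [Nat.descFactorial_of_lt h]

theorem risingFac_neg_natCast_eq_zero {a r : ℕ} (h : a < r) : risingFac (-(a : ℚ)) r = 0 := by
  simp [risingFac_neg_natCast, Nat.descFactorial_of_lt h]

theorem sum_choose_mul_choose_mul_risingFac {M N r : ℕ} (hrM : r ≤ M) (hrN : r ≤ N) :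
    ∑ i ∈ range (min M N + 1), (M.choose i : ℚ) * N.choose i * risingFac (-(i : ℚ)) r
      = (M + N).choose M * risingFac (-(M : ℚ)) r * risingFac (-(N : ℚ)) r
          / risingFac (-((M : ℚ) + N)) r := by
  have hrange : ∑ i ∈ range (min M N + 1), (M.choose i : ℚ) * N.choose i * risingFac (-(i : ℚ)) r
      = ∑ i ∈ range (N + 1), (M.choose i : ℚ) * N.choose i * risingFac (-(i : ℚ)) r :=
    sum_subset (range_subset_range.2 (by omega)) fun i hi hi' => by
      simp only [mem_range] at hi hi'
      simp [Nat.choose_eq_zero_of_lt (show M < i by omega)]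
  have hsum : ∑ i ∈ range (N + 1), (M.choose i : ℚ) * N.choose i * (i.descFactorial r : ℚ)
      = M.descFactorial r * (M + N - r).choose (N - r) := by
    rw [show M + N - r = M - r + N by omega]
    exact_mod_cast Nat.sum_choose_mul_choose_mul_descFactorial hrN
  have hcancel : ((M + N - r).choose (N - r) : ℚ) * (M + N).descFactorial r
      = (M + N).choose N * N.descFactorial r := by
    exact_mod_cast Nat.choose_sub_mul_descFactorial hrN
  have hne : ((M + N).descFactorial r : ℚ) ≠ 0 := by
    exact_mod_cast (Nat.descFactorial_pos.2 (by omega)).ne'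
  rw [hrange, show -((M : ℚ) + N) = -((M + N : ℕ) : ℚ) by push_cast; ring]
  simp only [risingFac_neg_natCast, mul_left_comm _ ((-1 : ℚ) ^ r), ← mul_sum, hsum]
  rw [Nat.choose_symm_add, eq_div_iff (mul_ne_zero (pow_ne_zero _ (by norm_num)) hne)]
  linear_combination ((-1 : ℚ) ^ r) ^ 2 * (M.descFactorial r : ℚ) * hcancel

theorem hahn_presentation_eq_racah_presentation_general
    (n m k l : ℕ) (hl : m + k ≤ n + l)
    (hlm : l ≤ m) (x : ℕ) :
    ∑ i ∈ Finset.range (min (m - l) (n + l - m - k) + 1),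
      ((m - l).choose i : ℚ) * ((n + l - m - k).choose i : ℚ) *
        ∑ r ∈ Finset.range (min i x + 1),
          risingFac (-(i : ℚ)) r * risingFac (-(x : ℚ)) r * risingFac ((x : ℚ) - n - 1) r /
            ((r.factorial : ℚ) * risingFac (-(m : ℚ)) r * risingFac ((m : ℚ) - n) r)
    = ((n - k).choose (m - l) : ℚ) * racahSum n m (m - l) (n + l - m - k) x := by
  have hMN : m - l + (n + l - m - k) = n - k := by omega
  set M := m - l
  set N := n + l - m - k
  set c : ℕ → ℚ := fun r => risingFac (-(x : ℚ)) r * risingFac ((x : ℚ) - n - 1) r /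
    ((r.factorial : ℚ) * risingFac (-(m : ℚ)) r * risingFac ((m : ℚ) - n) r)
  have hterm : ∀ i r : ℕ, risingFac (-(i : ℚ)) r * risingFac (-(x : ℚ)) r *
      risingFac ((x : ℚ) - n - 1) r / ((r.factorial : ℚ) * risingFac (-(m : ℚ)) r *
        risingFac ((m : ℚ) - n) r) = risingFac (-(i : ℚ)) r * c r := fun i r => by ring
  have hextend : ∀ i ∈ range (min M N + 1), ∑ r ∈ range (min i x + 1), risingFac (-(i : ℚ)) r * c r
      = ∑ r ∈ range (min x (min M N) + 1), risingFac (-(i : ℚ)) r * c r := fun i hi =>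
    sum_subset (range_subset_range.2 (by simp only [mem_range] at hi; omega)) fun r _ hr => by
      simp only [mem_range, not_lt] at hr
      rcases lt_or_ge i r with hir | hri
      · rw [risingFac_neg_natCast_eq_zero hir, zero_mul]
      · simp [c, risingFac_neg_natCast_eq_zero (show x < r by omega)]
  simp only [hterm]
  rw [sum_congr rfl fun i hi => congrArg _ (hextend i hi)]
  simp only [mul_sum]
  rw [sum_comm, racahSum, mul_sum]
  refine sum_congr rfl fun r hr => ?_
  simp only [mem_range] at hr
  simp only [← mul_assoc, ← sum_mul]
  rw [← hMN, sum_choose_mul_choose_mul_risingFac (by omega) (by omega)]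
  ring

/-- **Equivalence of the Hahn presentation and the Racah presentation** of the pmf
`p(x | n,m,k,l)`: with `M := m−l`, `N := n−m−k+l`,
`∑_{i=0}^{min(M,N)} C(M,i) C(N,i) ₃F₂(−i,−x,x−n−1;−m,m−n;1)
  = C(n−k,m−l) ₄F₃(−x,x−n−1,−M,−N;−m,m−n,−M−N;1)`. -/
theorem hahn_presentation_eq_racah_presentation
    (n m k l : ℕ) (hm : 2 * m ≤ n) (hk : k ≤ n) (hl : m + k ≤ n + l)
    (hlm : l ≤ m) (hlk : l ≤ k) (x : ℕ) (hx : x ≤ m) :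
    ∑ i ∈ Finset.range (min (m - l) (n + l - m - k) + 1),
      ((m - l).choose i : ℚ) * ((n + l - m - k).choose i : ℚ) *
        ∑ r ∈ Finset.range (min i x + 1),
          risingFac (-(i : ℚ)) r * risingFac (-(x : ℚ)) r * risingFac ((x : ℚ) - n - 1) r /
            ((r.factorial : ℚ) * risingFac (-(m : ℚ)) r * risingFac ((m : ℚ) - n) r)
    = ((n - k).choose (m - l) : ℚ) * racahSum n m (m - l) (n + l - m - k) x :=
  hahn_presentation_eq_racah_presentation_general n m k l hl hlm x
end

section
/- Let (n,m,k,l) be natural numbers with m ≤ n−m, k ≤ n, m+k−n ≤ l and l ≤ min(m,k), and set M := m−l, N := n−m−k+l. Then for every integer x with 0 ≤ x ≤ m the following summation formula of rational numbers holds: ∑_{u=0}^{x} C(n,u)·((n−2u+1)/(n−u+1))·[ ∑_{r=0}^{min(u,M,N)} ((−u)_r·(u−n−1)_r·(−M)_r·(−N)_r)/(r!·(−m)_r·(m−n)_r·(−M−N)_r) ] = C(n,x) · ∑_{r=0}^{min(x,M,N)} ((−x)_r·(x−n)_r·(−M)_r·(−N)_r)/(r!·(−m)_r·(m−n)_r·(−M−N)_r).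 Equivalently, the cumulative distribution function of the distribution P_{n,m,k,l} is given by a single terminating ₄F₃-hypergeometric series. -/
open Finset

/-
Swapping the two summations reduces the identity to one for each fixed `r`, which telescopes
in `u`: by `C(n,u-1)(n-u+1) = C(n,u) u` and the contiguous relation
`(n-u+1)(-u)_r(u-n)_r = u(1-u)_r(u-n-1)_r + (n-2u+1)(-u)_r(u-n-1)_r`, the `u`-th summand is
`T(u) - T(u-1)` with `T(u) = C(n,u)(-u)_r(u-n)_r`. The truncations at `min(u,M,N)` do not matter,
since `(-u)_r = 0` for `r > u`.
-/

open Polynomial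

lemma sum_range_min_add_one_of_eq_zero {β : Type*} [AddCommMonoid β] {x K : ℕ} {f : ℕ → β}
    (hf : ∀ r, x < r → f r = 0) :
    ∑ r ∈ range (min x K + 1), f r = ∑ r ∈ range (K + 1), f r :=
  sum_subset (range_subset_range.2 (by omega)) fun r hK hr =>
    hf r (by simp only [mem_range] at hK hr; omega)

lemma risingFac_eq_eval_ascPochhammer (a : ℚ) (r : ℕ) :
    risingFac a r = (ascPochhammer ℚ r).eval a := by
  induction r with
  | zero => simp [risingFac]
  | succ r ih => rw [risingFac, prod_range_succ, ← risingFac, ih, ascPochhammer_succ_eval]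

lemma risingFac_mul_add (a : ℚ) (r : ℕ) :
    risingFac a r * (a + r) = a * risingFac (a + 1) r := by
  simp only [risingFac_eq_eval_ascPochhammer, ← ascPochhammer_succ_eval,
    ascPochhammer_succ_left, eval_mul, eval_X, eval_comp, eval_add, eval_one]

lemma risingFac_neg_natCast_of_lt {x r : ℕ} (h : x < r) : risingFac (-(x : ℚ)) r = 0 := by
  rw [risingFac_eq_eval_ascPochhammer, ascPochhammer_eval_neg_coe_nat_of_lt h]

lemma risingFac_contiguous (u n : ℚ) (r : ℕ) (hu : u ≠ 0) (hun : u - n - 1 ≠ 0) :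
    (n - u + 1) * (risingFac (-u) r * risingFac (u - n) r)
      = u * (risingFac (1 - u) r * risingFac (u - n - 1) r)
        + (n - 2 * u + 1) * (risingFac (-u) r * risingFac (u - n - 1) r) := by
  have hA := risingFac_mul_add (-u) r
  have hB := risingFac_mul_add (u - n - 1) r
  rw [neg_add_eq_sub u 1] at hA
  rw [sub_add_cancel] at hB
  apply mul_left_cancel₀ (mul_ne_zero hu hun)
  linear_combination (-u * (u - n - 1) * risingFac (u - n - 1) r) * hA
    + (-u * (n - u + 1) * risingFac (-u) r) * hB

lemma sum_choose_mul_risingFac (n r x : ℕ) (hx : x ≤ n) :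
    ∑ u ∈ range (x + 1), (n.choose u : ℚ) * (((n : ℚ) - 2 * u + 1) / ((n : ℚ) - u + 1)) *
        (risingFac (-(u : ℚ)) r * risingFac ((u : ℚ) - n - 1) r)
      = n.choose x * (risingFac (-(x : ℚ)) r * risingFac ((x : ℚ) - n) r) := by
  induction x with
  | zero =>
    rcases Nat.eq_zero_or_pos r with rfl | hr
    · simp [risingFac, Nat.cast_add_one_ne_zero]
    · rw [sum_range_one, risingFac_neg_natCast_of_lt hr]
      simp
  | succ x ih =>
    rw [sum_range_succ, ih (by omega)]
    have hxn : (x : ℚ) + 1 ≤ n := by exact_mod_cast hx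
    have hchoose : (n.choose x : ℚ) * (n - x) = n.choose (x + 1) * (x + 1) := by
      have := Nat.choose_succ_right_eq n x
      rw [← Nat.cast_sub (by omega)]
      exact_mod_cast this.symm
    have key := risingFac_contiguous ((x : ℚ) + 1) n r (by positivity) (by linarith)
    rw [show 1 - ((x : ℚ) + 1) = -x by ring, show (x : ℚ) + 1 - n - 1 = x - n by ring] at key
    have hden : (n : ℚ) - (x + 1) + 1 ≠ 0 := by linarith
    push_cast
    rw [show (x : ℚ) + 1 - n - 1 = x - n by ring]
    field_simp
    linear_combination (risingFac (-(x : ℚ)) r * risingFac ((x : ℚ) - n) r) * hchoose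
      - (n.choose (x + 1) : ℚ) * key

lemma sum_choose_mul_sum_risingFac (n K x : ℕ) (c : ℕ → ℚ) (hx : x ≤ n) :
    ∑ u ∈ range (x + 1), (n.choose u : ℚ) * (((n : ℚ) - 2 * u + 1) / ((n : ℚ) - u + 1)) *
        ∑ r ∈ range K, c r * (risingFac (-(u : ℚ)) r * risingFac ((u : ℚ) - n - 1) r)
      = n.choose x *
          ∑ r ∈ range K, c r * (risingFac (-(x : ℚ)) r * risingFac ((x : ℚ) - n) r) := by
  calc _ = ∑ r ∈ range K, c r * ∑ u ∈ range (x + 1),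
          (n.choose u : ℚ) * (((n : ℚ) - 2 * u + 1) / ((n : ℚ) - u + 1)) *
            (risingFac (-(u : ℚ)) r * risingFac ((u : ℚ) - n - 1) r) := by
        simp_rw [mul_sum]
        rw [sum_comm]
        exact sum_congr rfl fun r _ => sum_congr rfl fun u _ => by ring
    _ = _ := by
        simp_rw [sum_choose_mul_risingFac n _ x hx, mul_sum]
        exact sum_congr rfl fun r _ => by ring

lemma sum_choose_mul_racahSum (n m M N x : ℕ) (hx : x ≤ n) :
    ∑ u ∈ range (x + 1), (n.choose u : ℚ) * (((n : ℚ) - 2 * u + 1) / ((n : ℚ) - u + 1)) *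
        racahSum n m M N u
      = n.choose x * ∑ r ∈ range (min x (min M N) + 1),
          risingFac (-(x : ℚ)) r * risingFac ((x : ℚ) - n) r * risingFac (-(M : ℚ)) r *
              risingFac (-(N : ℚ)) r /
            ((r.factorial : ℚ) * risingFac (-(m : ℚ)) r * risingFac ((m : ℚ) - n) r *
              risingFac (-((M : ℚ) + N)) r) := by
  let c (r : ℕ) : ℚ := risingFac (-(M : ℚ)) r * risingFac (-(N : ℚ)) r /
    ((r.factorial : ℚ) * risingFac (-(m : ℚ)) r * risingFac ((m : ℚ) - n) r *
      risingFac (-((M : ℚ) + N)) r)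
  have hR (u : ℕ) : racahSum n m M N u = ∑ r ∈ range (min M N + 1),
      c r * (risingFac (-(u : ℚ)) r * risingFac ((u : ℚ) - n - 1) r) := by
    rw [racahSum, sum_range_min_add_one_of_eq_zero fun r hr => by
      simp [risingFac_neg_natCast_of_lt hr]]
    exact sum_congr rfl fun r _ => by ring
  simp_rw [hR, sum_choose_mul_sum_risingFac n _ x c hx]
  rw [sum_range_min_add_one_of_eq_zero (x := x) (K := min M N) fun r hr => by
    simp [risingFac_neg_natCast_of_lt hr]]
  exact congrArg _ (sum_congr rfl fun r _ => by ring)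

theorem cdf_four_three_presentation_general
    (n m k l : ℕ) (hm : 2 * m ≤ n) (x : ℕ) (hx : x ≤ m) :
    ∑ u ∈ Finset.range (x + 1),
      (n.choose u : ℚ) * (((n : ℚ) - 2 * u + 1) / ((n : ℚ) - u + 1)) *
        racahSum n m (m - l) (n + l - m - k) u
    = (n.choose x : ℚ) *
        ∑ r ∈ Finset.range (min x (min (m - l) (n + l - m - k)) + 1),
          risingFac (-(x : ℚ)) r * risingFac ((x : ℚ) - n) r *
              risingFac (-((m - l : ℕ) : ℚ)) r * risingFac (-((n + l - m - k : ℕ) : ℚ)) r /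
            ((r.factorial : ℚ) * risingFac (-(m : ℚ)) r * risingFac ((m : ℚ) - n) r *
              risingFac (-(((m - l : ℕ) : ℚ) + ((n + l - m - k : ℕ) : ℚ))) r) :=
  sum_choose_mul_racahSum n m (m - l) (n + l - m - k) x (by omega)

/-- **`₄F₃`-presentation of the cumulative distribution function**: with `M := m−l`,
`N := n−m−k+l`,
`∑_{u=0}^{x} C(n,u) ((n−2u+1)/(n−u+1)) ₄F₃(−u,u−n−1,−M,−N;−m,m−n,−M−N;1)
  = C(n,x) ₄F₃(−x,x−n,−M,−N;−m,m−n,−M−N;1)`. -/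
theorem cdf_four_three_presentation
    (n m k l : ℕ) (hm : 2 * m ≤ n) (hk : k ≤ n) (hl : m + k ≤ n + l)
    (hlm : l ≤ m) (hlk : l ≤ k) (x : ℕ) (hx : x ≤ m) :
    ∑ u ∈ Finset.range (x + 1),
      (n.choose u : ℚ) * (((n : ℚ) - 2 * u + 1) / ((n : ℚ) - u + 1)) *
        racahSum n m (m - l) (n + l - m - k) u
    = (n.choose x : ℚ) *
        ∑ r ∈ Finset.range (min x (min (m - l) (n + l - m - k)) + 1),
          risingFac (-(x : ℚ)) r * risingFac ((x : ℚ) - n) r *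
              risingFac (-((m - l : ℕ) : ℚ)) r * risingFac (-((n + l - m - k : ℕ) : ℚ)) r /
            ((r.factorial : ℚ) * risingFac (-(m : ℚ)) r * risingFac ((m : ℚ) - n) r *
              risingFac (-(((m - l : ℕ) : ℚ) + ((n + l - m - k : ℕ) : ℚ))) r) :=
  cdf_four_three_presentation_general n m k l hm x hx
end

section
/- Let (n,m,k,l) be natural numbers with m ≤ n−m, k ≤ n, m+k−n ≤ l and l ≤ min(m,k), and assume k = l. Then for every integer x with 0 ≤ x ≤ m, the explicit Racah-presentation pmf satisfies p(x | n,m,l,l) = (C(n,x)/C(n,m)) · (C(l,x)/C(m,x)) · ((n−2x+1)/(n−x+1)) · C(n−l−x, m−l). In particular p(x | n,m,l,l) = 0 for l < x ≤ m. -/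
open Finset

/-- The explicit Racah-presentation probability mass function `p(x | n,m,k,l)`,
with `M := m−l` and `N := n−m−k+l` (realized as `n+l-m-k` in `ℕ`). -/
noncomputable def racahPMF (n m k l x : ℕ) : ℚ :=
  ((n - k).choose (m - l) : ℚ) * ((n.choose x : ℚ) / (n.choose m : ℚ)) *
    (((n : ℚ) - 2 * x + 1) / ((n : ℚ) - x + 1)) *
    racahSum n m (m - l) (n + l - m - k) x

namespace Racah

/-- Falling factorial `a(a−1)⋯(a−r+1)` in `ℚ`. -/
noncomputable def qfall (a : ℚ) (r : ℕ) : ℚ := ∏ j ∈ Finset.range r, (a - j)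

@[simp] lemma risingFac_zero (a : ℚ) : risingFac a 0 = 1 := by simp [risingFac]
@[simp] lemma qfall_zero (a : ℚ) : qfall a 0 = 1 := by simp [qfall]

lemma risingFac_succ (a : ℚ) (r : ℕ) : risingFac a (r + 1) = risingFac a r * (a + r) := by
  simp [risingFac, Finset.prod_range_succ]

lemma qfall_succ (a : ℚ) (r : ℕ) : qfall a (r + 1) = qfall a r * (a - r) := by
  simp [qfall, Finset.prod_range_succ]

lemma risingFac_succ' (a : ℚ) (r : ℕ) : risingFac a (r + 1) = a * risingFac (a + 1) r := by
  unfold risingFac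
  rw [Finset.prod_range_succ']
  rw [Finset.prod_congr rfl (fun j _ => show a + ((j + 1 : ℕ) : ℚ) = (a + 1) + j by push_cast; ring)]
  simp [mul_comm]

lemma risingFac_neg (a : ℚ) (r : ℕ) : risingFac (-a) r = (-1) ^ r * qfall a r := by
  induction r with
  | zero => simp
  | succ r ih => rw [risingFac_succ, qfall_succ, ih, pow_succ]; push_cast; ring

lemma qfall_add (a : ℚ) (r s : ℕ) :
    qfall a (r + s) = qfall a r * risingFac (a - ((r + s : ℕ) : ℚ) + 1) s := by
  induction s with
  | zero => simp
  | succ s ih =>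
      rw [show r + (s + 1) = (r + s) + 1 from rfl, qfall_succ, ih,
        risingFac_succ' (a - ((r + s + 1 : ℕ) : ℚ) + 1) s,
        show a - ((r + s + 1 : ℕ) : ℚ) + 1 + 1 = a - ((r + s : ℕ) : ℚ) + 1 by push_cast; ring]
      push_cast; ring

lemma risingFac_eq_qfall (a : ℚ) (x : ℕ) : risingFac (a - x + 1) x = qfall a x := by
  have := qfall_add a 0 x
  simpa using this.symm

lemma qfall_split (a : ℚ) {r x : ℕ} (h : r ≤ x) :
    qfall a x = qfall a r * risingFac (a - (x : ℚ) + 1) (x - r) := by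
  obtain ⟨s, rfl⟩ := Nat.exists_eq_add_of_le h
  rw [qfall_add a r s]
  congr 2 <;> omega

lemma qfall_cast {a r : ℕ} (h : r ≤ a) : qfall (a : ℚ) r = (a.descFactorial r : ℚ) := by
  induction r with
  | zero => simp
  | succ r ih =>
      rw [qfall_succ, ih (by omega), Nat.descFactorial_succ]
      push_cast [Nat.cast_sub (show r ≤ a by omega)]
      ring

lemma qfall_zero_of_lt {a r : ℕ} (h : a < r) : qfall (a : ℚ) r = 0 :=
  Finset.prod_eq_zero (Finset.mem_range.2 h) (by simp)

lemma qfall_nat_ne_zero {a r : ℕ} (h : r ≤ a) : qfall (a : ℚ) r ≠ 0 := by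
  rw [qfall_cast h]
  exact Nat.cast_ne_zero.2 fun h0 => absurd (Nat.descFactorial_eq_zero_iff_lt.1 h0) (by omega)

lemma risingFac_ne_zero {a : ℚ} (ha : 0 < a) (r : ℕ) : risingFac a r ≠ 0 := by
  unfold risingFac
  refine Finset.prod_ne_zero_iff.2 fun j _ => ?_
  have : (0 : ℚ) ≤ (j : ℚ) := by positivity
  intro h
  nlinarith [h]

/-- Summand of the cleared (denominator-free) Pfaff–Saalschütz sum. -/
noncomputable def tt (A B C : ℚ) (x r : ℕ) : ℚ :=
  (-1) ^ r * (x.choose r : ℚ) * qfall A r * qfall B r *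
    risingFac (C - (x : ℚ) + 1) (x - r) * risingFac (A + B - C) (x - r)

/-- WZ-certificate partial sums for the Pfaff–Saalschütz recurrence. -/
noncomputable def HH (A B C : ℚ) (x s : ℕ) : ℚ :=
  (-1) ^ s * (x.choose s : ℚ) * qfall A (s + 1) * qfall B (s + 1) *
    risingFac (C - (x : ℚ) + 1) (x - s) * risingFac (A + B - C) (x - s)

lemma step0 (A B C : ℚ) (x : ℕ) :
    tt A B C (x + 1) 0 - (C - B - (x : ℚ)) * (A - C + (x : ℚ)) * tt A B C x 0
      = HH A B C x 0 := by
  unfold tt HH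
  rw [show x + 1 - 0 = x + 1 from rfl, show x - 0 = x from rfl,
    risingFac_succ (A + B - C) x,
    risingFac_succ' (C - ((x + 1 : ℕ) : ℚ) + 1) x,
    show C - ((x + 1 : ℕ) : ℚ) + 1 + 1 = C - (x : ℚ) + 1 by push_cast; ring,
    show qfall A (0 + 1) = A by rw [qfall_succ]; simp,
    show qfall B (0 + 1) = B by rw [qfall_succ]; simp]
  simp only [Nat.choose_zero_right, qfall_zero]
  push_cast
  ring

lemma stepTop (A B C : ℚ) (r : ℕ) :
    tt A B C (r + 1) (r + 1) - (C - B - (r : ℚ)) * (A - C + (r : ℚ)) * tt A B C r (r + 1)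
      = HH A B C r (r + 1) - HH A B C r r := by
  unfold tt HH
  rw [show r + 1 - (r + 1) = 0 from by omega, show r - (r + 1) = 0 from by omega,
    show r - r = 0 from by omega]
  simp [Nat.choose_succ_self, pow_succ]

lemma stepS (A B C : ℚ) (r j : ℕ) :
    tt A B C ((r + j + 1) + 1) (r + 1)
        - (C - B - ((r + j + 1 : ℕ) : ℚ)) * (A - C + ((r + j + 1 : ℕ) : ℚ))
            * tt A B C (r + j + 1) (r + 1)
      = HH A B C (r + j + 1) (r + 1) - HH A B C (r + j + 1) r := by
  have hc : ((r + j + 1).choose (r + 1) : ℚ) * ((r : ℚ) + 1)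
      = ((r + j + 1).choose r : ℚ) * ((j : ℚ) + 1) := by
    have := Nat.choose_succ_right_eq (r + j + 1) r
    rw [show r + j + 1 - r = j + 1 from by omega] at this
    exact_mod_cast congrArg (Nat.cast : ℕ → ℚ) this
  unfold tt HH
  rw [show r + j + 1 + 1 - (r + 1) = j + 1 from by omega,
    show r + j + 1 - (r + 1) = j from by omega,
    show r + j + 1 - r = j + 1 from by omega,
    Nat.choose_succ_succ (r + j + 1) r,
    risingFac_succ' (C - ((r + j + 1 + 1 : ℕ) : ℚ) + 1) j,
    show C - ((r + j + 1 + 1 : ℕ) : ℚ) + 1 + 1 = C - ((r + j + 1 : ℕ) : ℚ) + 1 by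
      push_cast; ring,
    risingFac_succ (A + B - C) j,
    risingFac_succ (C - ((r + j + 1 : ℕ) : ℚ) + 1) j,
    qfall_succ A (r + 1), qfall_succ B (r + 1)]
  have hr1 : ((r : ℚ) + 1) ≠ 0 := by positivity
  have hc2 : ((r + j + 1).choose (r + 1) : ℚ)
      = ((r + j + 1).choose r : ℚ) * ((j : ℚ) + 1) / ((r : ℚ) + 1) := by
    field_simp
    linarith [hc]
  push_cast
  rw [hc2]
  field_simp
  ring

lemma step (A B C : ℚ) (x r : ℕ) (h : r ≤ x + 1) :
    tt A B C (x + 1) r - (C - B - (x : ℚ)) * (A - C + (x : ℚ)) * tt A B C x r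
      = HH A B C x r - (if r = 0 then 0 else HH A B C x (r - 1)) := by
  rcases Nat.eq_zero_or_pos r with rfl | hr0
  · simpa using step0 A B C x
  · obtain ⟨s, rfl⟩ : ∃ s, r = s + 1 := ⟨r - 1, by omega⟩
    simp only [Nat.add_sub_cancel, if_neg (Nat.succ_ne_zero s)]
    rcases Nat.lt_or_ge s x with hs | hs
    · obtain ⟨j, rfl⟩ : ∃ j, x = s + j + 1 := ⟨x - s - 1, by omega⟩
      have := stepS A B C s j
      push_cast at this ⊢
      linarith [this]
    · have hsx : s = x := by omega
      subst hsx
      have := stepTop A B C s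
      linarith [this]

lemma partialSum (A B C : ℚ) (x N : ℕ) (hN : N ≤ x + 1) :
    ∑ r ∈ Finset.range (N + 1),
        (tt A B C (x + 1) r - (C - B - (x : ℚ)) * (A - C + (x : ℚ)) * tt A B C x r)
      = HH A B C x N := by
  induction N with
  | zero => simpa using step0 A B C x
  | succ N ih =>
      rw [Finset.sum_range_succ, ih (by omega), step A B C x (N + 1) hN]
      simp

/-- **Pfaff–Saalschütz summation** (cleared, polynomial form). -/
lemma saal (A B C : ℚ) (x : ℕ) :
    ∑ r ∈ Finset.range (x + 1), tt A B C x r = qfall (C - B) x * risingFac (A - C) x := by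
  induction x with
  | zero => simp [tt, qfall, risingFac]
  | succ x ih =>
      have hps := partialSum A B C x (x + 1) le_rfl
      have hH : HH A B C x (x + 1) = 0 := by
        simp [HH, Nat.choose_succ_self]
      rw [hH, Finset.sum_sub_distrib, ← Finset.mul_sum] at hps
      have hz : tt A B C x (x + 1) = 0 := by simp [tt, Nat.choose_succ_self]
      rw [show ∑ i ∈ Finset.range (x + 1 + 1), tt A B C x i
            = ∑ i ∈ Finset.range (x + 1), tt A B C x i + tt A B C x (x + 1)
          from Finset.sum_range_succ _ _, hz, add_zero, ih, sub_eq_zero] at hps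
      rw [hps, qfall_succ, risingFac_succ]
      push_cast
      ring

lemma term_eq (n m l x r : ℕ) (hm : 2 * m ≤ n) (hlm : l ≤ m) (hx : x ≤ m) (hr : r ≤ x) :
    risingFac (-(x : ℚ)) r * risingFac ((x : ℚ) - n - 1) r * risingFac (-((m - l : ℕ) : ℚ)) r *
        risingFac (-((n - m : ℕ) : ℚ)) r /
      ((r.factorial : ℚ) * risingFac (-(m : ℚ)) r * risingFac ((m : ℚ) - n) r *
        risingFac (-(((m - l : ℕ) : ℚ) + ((n - m : ℕ) : ℚ))) r)
    = tt ((n : ℚ) + 1 - (x : ℚ)) ((m - l : ℕ) : ℚ) (m : ℚ) x r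
        / (qfall (m : ℚ) x * qfall ((n - l : ℕ) : ℚ) x) := by
  have c1 : ((n - m : ℕ) : ℚ) = (n : ℚ) - m := by
    push_cast [Nat.cast_sub (by omega : m ≤ n)]; ring
  have c2 : ((m - l : ℕ) : ℚ) = (m : ℚ) - l := by
    push_cast [Nat.cast_sub hlm]; ring
  have c3 : ((n - l : ℕ) : ℚ) = (n : ℚ) - l := by
    push_cast [Nat.cast_sub (by omega : l ≤ n)]; ring
  rw [show (x : ℚ) - n - 1 = -((n : ℚ) + 1 - x) by ring,
    show (m : ℚ) - n = -(((n - m : ℕ) : ℚ)) by rw [c1]; ring,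
    show (((m - l : ℕ) : ℚ) + ((n - m : ℕ) : ℚ)) = ((n - l : ℕ) : ℚ) by
      rw [c1, c2, c3]; ring]
  simp only [risingFac_neg]
  unfold tt
  rw [qfall_split (m : ℚ) hr, qfall_split ((n - l : ℕ) : ℚ) hr,
    show (n : ℚ) + 1 - x + ((m - l : ℕ) : ℚ) - m = ((n - l : ℕ) : ℚ) - x + 1 by
      rw [c2, c3]; ring]
  have hfx : qfall ((x : ℕ) : ℚ) r = (r.factorial : ℚ) * (x.choose r : ℚ) := by
    rw [qfall_cast hr, Nat.descFactorial_eq_factorial_mul_choose]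
    push_cast; ring
  rw [hfx]
  have h1 : ((r.factorial : ℚ)) ≠ 0 := by positivity
  have h2 : qfall ((n - m : ℕ) : ℚ) r ≠ 0 := qfall_nat_ne_zero (by omega)
  have h3 : qfall ((m : ℕ) : ℚ) r ≠ 0 := qfall_nat_ne_zero (by omega)
  have h4 : qfall ((n - l : ℕ) : ℚ) r ≠ 0 := qfall_nat_ne_zero (by omega)
  have h5 : risingFac ((m : ℚ) - x + 1) (x - r) ≠ 0 := by
    apply risingFac_ne_zero
    have : (x : ℚ) ≤ m := by exact_mod_cast hx
    linarith
  have h6 : risingFac (((n - l : ℕ) : ℚ) - x + 1) (x - r) ≠ 0 := by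
    apply risingFac_ne_zero
    have : (x : ℚ) ≤ ((n - l : ℕ) : ℚ) := by exact_mod_cast (by omega : x ≤ n - l)
    linarith
  have h7 : ((-1 : ℚ)) ^ r ≠ 0 := pow_ne_zero _ (by norm_num)
  field_simp

lemma racahSum_eval (n m l x : ℕ) (hm : 2 * m ≤ n) (hlm : l ≤ m) (hx : x ≤ m) :
    racahSum n m (m - l) (n - m) x
      = qfall (l : ℚ) x * qfall ((n - m : ℕ) : ℚ) x
          / (qfall (m : ℚ) x * qfall ((n - l : ℕ) : ℚ) x) := by
  unfold racahSum
  rw [show min x (min (m - l) (n - m)) = min x (m - l) from by omega]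
  rw [Finset.sum_subset (Finset.range_subset_range.2 (by omega : min x (m - l) + 1 ≤ x + 1))
    (by
      intro r hrange hnot
      have h1 : m - l < r := by
        simp only [Finset.mem_range] at hrange hnot; omega
      have h0 : risingFac (-(((m - l : ℕ)) : ℚ)) r = 0 := by
        rw [risingFac_neg, qfall_zero_of_lt h1, mul_zero]
      rw [h0]
      simp)]
  rw [Finset.sum_congr rfl
    (fun r hrmem => term_eq n m l x r hm hlm hx (by simp only [Finset.mem_range] at hrmem; omega))]
  rw [← Finset.sum_div, saal]
  rw [show (m : ℚ) - ((m - l : ℕ) : ℚ) = (l : ℚ) by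
      push_cast [Nat.cast_sub hlm]; ring,
    show (n : ℚ) + 1 - (x : ℚ) - (m : ℚ) = ((n - m : ℕ) : ℚ) - x + 1 by
      push_cast [Nat.cast_sub (by omega : m ≤ n)]; ring,
    risingFac_eq_qfall]

lemma key (n m l x : ℕ) (hm : 2 * m ≤ n) (hlm : l ≤ m) (hx : x ≤ m) :
    ((n - l).choose (m - l) : ℚ) *
        (qfall (l : ℚ) x * qfall ((n - m : ℕ) : ℚ) x
          / (qfall (m : ℚ) x * qfall ((n - l : ℕ) : ℚ) x))
      = (l.choose x : ℚ) / (m.choose x : ℚ) * ((n - l - x).choose (m - l) : ℚ) := by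
  rcases le_or_gt x l with hxl | hlx
  · have e1 : qfall (l : ℚ) x = (x.factorial : ℚ) * (l.choose x : ℚ) := by
      rw [qfall_cast hxl, Nat.descFactorial_eq_factorial_mul_choose]; push_cast; ring
    have e2 : qfall ((n - m : ℕ) : ℚ) x = (x.factorial : ℚ) * ((n - m).choose x : ℚ) := by
      rw [qfall_cast (by omega), Nat.descFactorial_eq_factorial_mul_choose]; push_cast; ring
    have e3 : qfall ((m : ℕ) : ℚ) x = (x.factorial : ℚ) * (m.choose x : ℚ) := by
      rw [qfall_cast hx, Nat.descFactorial_eq_factorial_mul_choose]; push_cast; ring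
    have e4 : qfall ((n - l : ℕ) : ℚ) x = (x.factorial : ℚ) * ((n - l).choose x : ℚ) := by
      rw [qfall_cast (by omega), Nat.descFactorial_eq_factorial_mul_choose]; push_cast; ring
    rw [e1, e2, e3, e4]
    rw [Nat.cast_choose ℚ (show m - l ≤ n - l by omega),
      Nat.cast_choose ℚ (show x ≤ l from hxl),
      Nat.cast_choose ℚ (show x ≤ n - m by omega),
      Nat.cast_choose ℚ (show x ≤ m from hx),
      Nat.cast_choose ℚ (show x ≤ n - l by omega),
      Nat.cast_choose ℚ (show m - l ≤ n - l - x by omega),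
      show n - l - (m - l) = n - m from by omega,
      show n - l - x - (m - l) = n - m - x from by omega]
    field_simp
  · rw [qfall_zero_of_lt hlx, Nat.choose_eq_zero_of_lt hlx]
    simp

end Racah

/-- **Closed form of the pmf in the case `k = l`** (Pfaff–Saalschütz evaluation):
`p(x | n,m,l,l) = (C(n,x)/C(n,m)) (C(l,x)/C(m,x)) ((n−2x+1)/(n−x+1)) C(n−l−x, m−l)`
for `0 ≤ x ≤ m`; in particular `p(x | n,m,l,l) = 0` for `l < x ≤ m`. -/
theorem racahPMF_k_eq_l (n m l : ℕ) (hm : 2 * m ≤ n) (hlm : l ≤ m) :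
    (∀ x : ℕ, x ≤ m →
      racahPMF n m l l x
        = ((n.choose x : ℚ) / (n.choose m : ℚ)) * ((l.choose x : ℚ) / (m.choose x : ℚ)) *
            (((n : ℚ) - 2 * x + 1) / ((n : ℚ) - x + 1)) * ((n - l - x).choose (m - l) : ℚ))
    ∧ (∀ x : ℕ, l < x → x ≤ m → racahPMF n m l l x = 0) := by
  have main : ∀ x : ℕ, x ≤ m →
      racahPMF n m l l x
        = ((n.choose x : ℚ) / (n.choose m : ℚ)) * ((l.choose x : ℚ) / (m.choose x : ℚ)) *
            (((n : ℚ) - 2 * x + 1) / ((n : ℚ) - x + 1)) * ((n - l - x).choose (m - l) : ℚ) := by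
    intro x hx
    unfold racahPMF
    rw [show n + l - m - l = n - m from by omega]
    rw [Racah.racahSum_eval n m l x hm hlm hx]
    have hkey := Racah.key n m l x hm hlm hx
    linear_combination (((n.choose x : ℚ) / (n.choose m : ℚ)) *
      (((n : ℚ) - 2 * x + 1) / ((n : ℚ) - x + 1))) * hkey
  refine ⟨main, fun x hlx hx => ?_⟩
  rw [main x hx, Nat.choose_eq_zero_of_lt hlx]
  simp
end

section
/- Let α, β, γ, δ be nonnegative real numbers with α+β+γ+δ = 1, and set η := αγ+αδ+βγ, D := 1−4η, μ := (1−√D)/2 and ξ := α+β. Then: (i) 0 ≤ η ≤ 1/4, and η = 1/4 (equivalently D = 0) holds if and only if (α,β) = (1/2, 0) or (γ,δ) = (1/2, 0); (ii) 0 ≤ μ ≤ min(ξ, 1/2); (iii) if ξ ≤ 1/2, then μ = ξ holds if and only if β·δ = 0; (iv) if β·δ = 0, then μ = ξ when ξ < 1/2, μ = 1/2 when ξ = 1/2, and μ = 1−ξ when ξ > 1/2. -/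
set_option maxHeartbeats 1000000


/-- **Properties of the Type II limit parameters** `η, D, μ, ξ` built from the
fixed ratios `α, β, γ, δ ≥ 0` with `α+β+γ+δ = 1`:
(i) `0 ≤ η ≤ 1/4`, with `η = 1/4` iff `(α,β) = (1/2,0)` or `(γ,δ) = (1/2,0)`;
(ii) `0 ≤ μ ≤ min(ξ, 1/2)`;
(iii) if `ξ ≤ 1/2` then `μ = ξ ↔ βδ = 0`;
(iv) if `βδ = 0` then `μ = ξ` when `ξ < 1/2`, `μ = 1/2` when `ξ = 1/2`,
and `μ = 1−ξ` when `ξ > 1/2`. -/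
theorem typeII_parameter_lemma (α β γ δ : ℝ)
    (hα : 0 ≤ α) (hβ : 0 ≤ β) (hγ : 0 ≤ γ) (hδ : 0 ≤ δ)
    (hsum : α + β + γ + δ = 1) :
    let η : ℝ := α * γ + α * δ + β * γ
    let D : ℝ := 1 - 4 * η
    let μ : ℝ := (1 - Real.sqrt D) / 2
    let ξ : ℝ := α + β
    (0 ≤ η ∧ η ≤ 1 / 4 ∧ (η = 1 / 4 ↔ (α = 1 / 2 ∧ β = 0) ∨ (γ = 1 / 2 ∧ δ = 0)))
    ∧ (0 ≤ μ ∧ μ ≤ min ξ (1 / 2))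
    ∧ (ξ ≤ 1 / 2 → (μ = ξ ↔ β * δ = 0))
    ∧ (β * δ = 0 →
        ((ξ < 1 / 2 → μ = ξ) ∧ (ξ = 1 / 2 → μ = 1 / 2) ∧ (1 / 2 < ξ → μ = 1 - ξ))) := by
  intro η D μ ξ
  have hη : η = α * γ + α * δ + β * γ := rfl
  have hDdef : D = 1 - 4 * η := rfl
  have hμ : μ = (1 - Real.sqrt D) / 2 := rfl
  have hξ : ξ = α + β := rfl
  clear_value η D μ ξ
  have hβδ : 0 ≤ β * δ := mul_nonneg hβ hδ
  -- key identity
  have hDkey : D = (1 - 2 * ξ) ^ 2 + 4 * (β * δ) := by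
    rw [hDdef, hη, hξ]; linear_combination (-4 * (α + β)) * hsum
  have hD0 : 0 ≤ D := by rw [hDkey]; positivity
  set s := Real.sqrt D with hs
  have hs0 : 0 ≤ s := Real.sqrt_nonneg D
  have hs2 : s ^ 2 = D := Real.sq_sqrt hD0
  have hD1 : D ≤ 1 := by
    rw [hDdef, hη]
    nlinarith [mul_nonneg hα hγ, mul_nonneg hα hδ, mul_nonneg hβ hγ]
  have hs1 : s ≤ 1 := by
    rw [hs, show (1 : ℝ) = Real.sqrt 1 by simp]
    exact Real.sqrt_le_sqrt hD1
  have habs : |1 - 2 * ξ| ≤ s := by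
    have h1 : (1 - 2 * ξ) ^ 2 ≤ D := by rw [hDkey]; nlinarith
    calc |1 - 2 * ξ| = Real.sqrt ((1 - 2 * ξ) ^ 2) := (Real.sqrt_sq_eq_abs _).symm
      _ ≤ s := Real.sqrt_le_sqrt h1
  have habs1 : 1 - 2 * ξ ≤ s := le_trans (le_abs_self _) habs
  have habs2 : 2 * ξ - 1 ≤ s := by
    have h := neg_abs_le (1 - 2 * ξ); linarith
  refine ⟨⟨?_, ?_, ?_, ?_⟩, ⟨?_, ?_⟩, ?_, ?_⟩
  · rw [hη]; positivity
  · nlinarith [hD0, hDdef]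
  · -- η = 1/4 → cases
    intro h14
    have hDz : D = 0 := by rw [hDdef, h14]; ring
    have h1 : (1 - 2 * ξ) = 0 ∧ β * δ = 0 := by
      constructor <;> nlinarith [sq_nonneg (1 - 2 * ξ)]
    rcases mul_eq_zero.mp h1.2 with hb | hd
    · left
      constructor
      · rw [hξ] at h1; linarith [h1.1]
      · exact hb
    · right
      constructor
      · rw [hξ] at h1; linarith [h1.1]
      · exact hd
  · rintro (⟨ha, hb⟩ | ⟨hg, hd⟩)
    · rw [ha, hb] at hsum
      rw [hη, ha, hb]; linarith
    · rw [hg, hd] at hsum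
      rw [hη, hg, hd]; linarith
  · rw [hμ]; linarith
  · rw [le_min_iff, hμ]
    constructor
    · linarith
    · linarith
  · -- part iii
    intro hhalf
    constructor
    · intro hme
      have hseq : s = 1 - 2 * ξ := by rw [hμ] at hme; linarith
      have : D = (1 - 2 * ξ) ^ 2 := by rw [← hs2, hseq]
      nlinarith [hDkey]
    · intro hbd
      have hD' : D = (1 - 2 * ξ) ^ 2 := by rw [hDkey, hbd]; ring
      have : s = 1 - 2 * ξ := by
        rw [hs, hD', Real.sqrt_sq_eq_abs, abs_of_nonneg (by linarith)]
      rw [hμ, this]; ring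
  · -- part iv
    intro hbd
    have hD' : D = (1 - 2 * ξ) ^ 2 := by rw [hDkey, hbd]; ring
    have hsabs : s = |1 - 2 * ξ| := by rw [hs, hD', Real.sqrt_sq_eq_abs]
    refine ⟨?_, ?_, ?_⟩
    · intro hlt
      rw [hμ, hsabs, abs_of_nonneg (by linarith)]; ring
    · intro heq
      rw [hμ, hsabs, heq]; norm_num
    · intro hgt
      rw [hμ, hsabs, abs_of_nonpos (by linarith)]; ring
end

section
/- Fix a rational number ξ with 0 < ξ < 1 and ξ ≠ 1/2, and set μ := min(ξ, 1−ξ). For positive integers n with nξ ∈ ℕ, set m := nξ and p_n(x) := (C(n,x) − C(n,x−1))/C(n,m) for integers 0 ≤ x ≤ min(m, n−m) (with C(n,−1) := 0), and p_n(x) := 0 otherwise. Then: (i) for each fixed i ∈ ℕ, lim_{n→∞} p_n(nμ − i) = (μ/(1−μ))^i · (1−2μ)/(1−μ), i.e. nμ − X asymptotically obeys the geometric distribution with parameter μ/(1−μ); (ii) lim_{n→∞} ( ∑_x x·p_n(x) − nμ ) = −μ/(1−2μ); (iii) writing E_n := ∑_x x·p_n(x), lim_{n→∞} ( ∑_x x²·p_n(x)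 − E_n² ) = μ(1−μ)/(1−2μ)². -/
/-!
Put `M = min m (n - m) = μ n`. The distribution function of `X` telescopes:
`P(X ≤ M - i) = C(n, M - i) / C(n, M) = ∏_{j < i} (M - j) / (n - M + j + 1)`, and every factor is
at most `r = μ / (1 - μ) < 1` and tends to `r`. So `Y = M - X` satisfies `P(Y = i) → (1 - r) r ^ i`
with `P(Y = i) ≤ r ^ i`, and by dominated convergence (Tannery's theorem) the first two moments of
`Y` converge to those of the geometric law. Finally `E X = M - E Y` and `Var X = Var Y`.
-/

open Finset

/-- The pmf `p(x) = (C(n,x) − C(n,x−1))/C(n,m)` of `P_{n,m,k,l}` in the case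
`m−l = 0` or `n−m−k+l = 0`, supported on `0 ≤ x ≤ min(m, n−m)`
(with the convention `C(n,−1) = 0`). -/
noncomputable def dimPMF (n m x : ℕ) : ℚ :=
  if x ≤ min m (n - m) then
    ((n.choose x : ℚ) - (if x = 0 then 0 else (n.choose (x - 1) : ℚ))) / (n.choose m : ℚ)
  else 0

open Filter Topology

def ratioAtTop (ξ : ℝ) : Filter (ℕ × ℕ) :=
  comap Prod.fst atTop ⊓ 𝓟 {p | (p.2 : ℝ) = p.1 * ξ}

namespace ratioAtTop

variable {ξ : ℝ}

lemma eventually_iff {P : ℕ × ℕ → Prop} :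
    (∀ᶠ p in ratioAtTop ξ, P p) ↔ ∃ n₀ : ℕ, ∀ n, n₀ ≤ n → ∀ m : ℕ, (m : ℝ) = n * ξ → P (n, m) := by
  simp only [ratioAtTop, eventually_inf_principal, eventually_comap, eventually_atTop,
    Set.mem_ofPred_eq, Prod.forall]
  exact exists_congr fun n₀ => forall₂_congr fun n _ =>
    ⟨fun h m => h n m rfl, fun h _ m hn => hn ▸ h m⟩

lemma tendsto_fst : Tendsto Prod.fst (ratioAtTop ξ) atTop :=
  tendsto_comap.mono_left inf_le_left

lemma eventually_snd_eq : ∀ᶠ p in ratioAtTop ξ, (p.2 : ℝ) = p.1 * ξ :=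
  mem_inf_of_right (mem_principal_self _)

lemma tendsto_snd (hξ : 0 < ξ) : Tendsto Prod.snd (ratioAtTop ξ) atTop := by
  refine (tendsto_natCast_atTop_iff (R := ℝ)).1 ?_
  refine (Tendsto.atTop_mul_const hξ (tendsto_natCast_atTop_atTop.comp tendsto_fst)).congr' ?_
  filter_upwards [eventually_snd_eq] with p hp using hp.symm

lemma tendsto_inv_fst : Tendsto (fun p : ℕ × ℕ => (p.1 : ℝ)⁻¹) (ratioAtTop ξ) (𝓝 0) :=
  tendsto_inv_atTop_zero.comp (tendsto_natCast_atTop_atTop.comp tendsto_fst)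

lemma eventually_snd_le (hξ : ξ ≤ 1) : ∀ᶠ p in ratioAtTop ξ, p.2 ≤ p.1 := by
  filter_upwards [eventually_snd_eq] with p hp
  exact_mod_cast hp.trans_le (mul_le_of_le_one_right p.1.cast_nonneg hξ)

lemma tendsto_min_sub (hξ : ξ ≤ 1) :
    Tendsto (fun p : ℕ × ℕ => (p.1, min p.2 (p.1 - p.2))) (ratioAtTop ξ)
      (ratioAtTop (min ξ (1 - ξ))) := by
  refine tendsto_inf.2 ⟨tendsto_comap_iff.2 tendsto_fst, tendsto_principal.2 ?_⟩
  filter_upwards [eventually_snd_eq, eventually_snd_le hξ] with ⟨n, m⟩ hm hmn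
  simp only [Nat.cast_min, Nat.cast_sub hmn, hm, mul_min_of_nonneg _ _ n.cast_nonneg]
  ring_nf

lemma exists_abs_sub_lt {ξ : ℚ} {F : ℕ → ℕ → ℚ} {L : ℚ}
    (h : Tendsto (fun p : ℕ × ℕ => (F p.1 p.2 : ℝ)) (ratioAtTop ξ) (𝓝 L)) {ε : ℚ} (hε : 0 < ε) :
    ∃ n₀ : ℕ, ∀ n, n₀ ≤ n → ∀ m : ℕ, (m : ℚ) = n * ξ → |F n m - L| < ε := by
  obtain ⟨n₀, hn₀⟩ := eventually_iff.1 (Metric.tendsto_nhds.1 h ε (by exact_mod_cast hε))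
  refine ⟨n₀, fun n hn m hm => ?_⟩
  have h := hn₀ n hn m (by exact_mod_cast hm)
  rw [Real.dist_eq] at h
  exact_mod_cast h

end ratioAtTop

/-- `C(n, M - i) / C(n, M)` for `i ≤ M ≤ n`, written as a product so that it vanishes for
`i > M`. -/
noncomputable def chooseRatio (n M i : ℕ) : ℝ :=
  ∏ j ∈ range i, ((M - j : ℕ) : ℝ) / ((n - M + j + 1 : ℕ) : ℝ)

section chooseRatio

variable {n M : ℕ} {μ : ℝ}

lemma chooseRatio_nonneg (n M i : ℕ) : 0 ≤ chooseRatio n M i :=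
  prod_nonneg fun _ _ => by positivity

lemma chooseRatio_eq_zero {i : ℕ} (h : M < i) : chooseRatio n M i = 0 :=
  prod_eq_zero (mem_range.2 h) (by simp)

lemma choose_sub_eq_mul_chooseRatio {i : ℕ} (hi : i ≤ M) (hM : M ≤ n) :
    (n.choose (M - i) : ℝ) = n.choose M * chooseRatio n M i := by
  induction i with
  | zero => simp [chooseRatio]
  | succ i ih =>
    have step := Nat.choose_succ_right_eq n (M - (i + 1))
    rw [show M - (i + 1) + 1 = M - i by omega, show n - (M - (i + 1)) = n - M + i + 1 by omega]
      at step
    have hD : ((n - M + i + 1 : ℕ) : ℝ) ≠ 0 := by positivity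
    rw [chooseRatio, prod_range_succ, ← chooseRatio, ← mul_assoc, ← ih (by omega), mul_div_assoc',
      eq_div_iff hD, ← Nat.cast_mul, ← Nat.cast_mul, ← step]

lemma chooseRatio_factor_le (hμ0 : 0 ≤ μ) (hμ1 : μ < 1) (hM : (M : ℝ) = n * μ) (j : ℕ) :
    ((M - j : ℕ) : ℝ) / ((n - M + j + 1 : ℕ) : ℝ) ≤ μ / (1 - μ) := by
  have hMn : M ≤ n := by exact_mod_cast hM.trans_le (mul_le_of_le_one_right n.cast_nonneg hμ1.le)
  have hMj : ((M - j : ℕ) : ℝ) ≤ M := by exact_mod_cast Nat.sub_le M j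
  rw [div_le_div_iff₀ (by positivity) (by linarith)]
  push_cast [hMn]
  nlinarith

lemma chooseRatio_le_pow (hμ0 : 0 ≤ μ) (hμ1 : μ < 1) (hM : (M : ℝ) = n * μ) (i : ℕ) :
    chooseRatio n M i ≤ (μ / (1 - μ)) ^ i := by
  rw [chooseRatio, ← card_range i, ← prod_const, card_range]
  exact prod_le_prod (fun _ _ => by positivity) fun j _ => chooseRatio_factor_le hμ0 hμ1 hM j

lemma chooseRatio_succ_le (hμ0 : 0 ≤ μ) (hμ : μ ≤ 1 / 2) (hM : (M : ℝ) = n * μ) (i : ℕ) :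
    chooseRatio n M (i + 1) ≤ chooseRatio n M i := by
  rw [chooseRatio, prod_range_succ, ← chooseRatio]
  refine mul_le_of_le_one_right (chooseRatio_nonneg n M i) ?_
  refine (chooseRatio_factor_le hμ0 (by linarith) hM i).trans ?_
  rw [div_le_one (by linarith)]
  linarith

end chooseRatio

/-- `P(M - X = i)`, where `M = min m (n - m)`. -/
noncomputable def gapPMF (n M i : ℕ) : ℝ := chooseRatio n M i - chooseRatio n M (i + 1)

section gapPMF

variable {n M : ℕ} {μ : ℝ}

lemma gapPMF_nonneg (hμ0 : 0 ≤ μ) (hμ : μ ≤ 1 / 2) (hM : (M : ℝ) = n * μ) (i : ℕ) :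
    0 ≤ gapPMF n M i :=
  sub_nonneg.2 (chooseRatio_succ_le hμ0 hμ hM i)

lemma gapPMF_le_pow (hμ0 : 0 ≤ μ) (hμ1 : μ < 1) (hM : (M : ℝ) = n * μ) (i : ℕ) :
    gapPMF n M i ≤ (μ / (1 - μ)) ^ i :=
  (sub_le_self _ (chooseRatio_nonneg n M _)).trans (chooseRatio_le_pow hμ0 hμ1 hM i)

lemma tsum_mul_gapPMF (f : ℕ → ℝ) :
    ∑' i, f i * gapPMF n M i = ∑ i ∈ range (M + 1), f i * gapPMF n M i := by
  refine tsum_eq_sum fun i hi => ?_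
  rw [mem_range, not_lt] at hi
  rw [gapPMF, chooseRatio_eq_zero (by omega), chooseRatio_eq_zero (by omega), sub_self, mul_zero]

lemma sum_range_gapPMF (n M : ℕ) : ∑ i ∈ range (M + 1), gapPMF n M i = 1 := by
  simp only [gapPMF]
  rw [sum_range_sub', chooseRatio_eq_zero M.lt_succ_self]
  simp [chooseRatio]

end gapPMF

section dimPMF

variable {n m : ℕ}

lemma choose_min_sub (hmn : m ≤ n) : n.choose (min m (n - m)) = n.choose m := by
  rcases min_choice m (n - m) with h | h <;> rw [h]
  exact Nat.choose_symm hmn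

lemma dimPMF_min_sub {i : ℕ} (hmn : m ≤ n) (hi : i ≤ min m (n - m)) :
    (dimPMF n m (min m (n - m) - i) : ℝ) = gapPMF n (min m (n - m)) i := by
  set M := min m (n - m)
  have hMn : M ≤ n := (min_le_left _ _).trans hmn
  have hC : (n.choose M : ℝ) ≠ 0 := by exact_mod_cast (Nat.choose_pos hMn).ne'
  have hprev : (Rat.cast (if M - i = 0 then 0 else (n.choose (M - i - 1) : ℚ)) : ℝ)
      = n.choose M * chooseRatio n M (i + 1) := by
    split_ifs with h
    · rw [chooseRatio_eq_zero (by omega), mul_zero, Rat.cast_zero]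
    · rw [Rat.cast_natCast, Nat.sub_sub, choose_sub_eq_mul_chooseRatio (by omega) hMn]
  rw [dimPMF, if_pos (Nat.sub_le M i), ← choose_min_sub hmn, Rat.cast_div, Rat.cast_sub, hprev,
    Rat.cast_natCast, Rat.cast_natCast, choose_sub_eq_mul_chooseRatio hi hMn, ← mul_sub,
    mul_div_cancel_left₀ _ hC, gapPMF]

lemma sum_mul_dimPMF (f : ℕ → ℝ) (hmn : m ≤ n) :
    ∑ x ∈ range (n + 1), f x * (dimPMF n m x : ℝ)
      = ∑ i ∈ range (min m (n - m) + 1), f (min m (n - m) - i) * gapPMF n (min m (n - m)) i := by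
  set M := min m (n - m)
  have hsupp : ∀ x ∈ range (n + 1), x ∉ range (M + 1) → f x * (dimPMF n m x : ℝ) = 0 := by
    intro x _ hx
    rw [mem_range, not_lt] at hx
    rw [dimPMF, if_neg (by omega), Rat.cast_zero, mul_zero]
  rw [← sum_subset (range_subset_range.2 (by omega)) hsupp, ← sum_range_reflect]
  refine sum_congr rfl fun i hi => ?_
  rw [mem_range] at hi
  rw [show M + 1 - 1 - i = M - i by omega, dimPMF_min_sub hmn (by omega)]

lemma sum_mul_dimPMF_eq (hmn : m ≤ n) :
    ∑ x ∈ range (n + 1), (x : ℝ) * (dimPMF n m x : ℝ)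
      = min m (n - m) - ∑' i : ℕ, (i : ℝ) * gapPMF n (min m (n - m)) i := by
  set M := min m (n - m)
  have hterm : ∀ i ∈ range (M + 1),
      ((M - i : ℕ) : ℝ) * gapPMF n M i = M * gapPMF n M i - i * gapPMF n M i := by
    intro i hi
    rw [Nat.cast_sub (by simpa [Nat.lt_succ_iff] using hi)]
    ring
  rw [sum_mul_dimPMF (fun x => (x : ℝ)) hmn, sum_congr rfl hterm, sum_sub_distrib, ← mul_sum,
    sum_range_gapPMF, mul_one, tsum_mul_gapPMF]

lemma sum_sq_mul_dimPMF_eq (hmn : m ≤ n) :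
    ∑ x ∈ range (n + 1), (x : ℝ) ^ 2 * (dimPMF n m x : ℝ)
      = (min m (n - m) : ℕ) ^ 2 - 2 * min m (n - m) * ∑' i : ℕ, (i : ℝ) * gapPMF n (min m (n - m)) i
        + ∑' i : ℕ, (i : ℝ) ^ 2 * gapPMF n (min m (n - m)) i := by
  set M := min m (n - m)
  have hterm : ∀ i ∈ range (M + 1), ((M - i : ℕ) : ℝ) ^ 2 * gapPMF n M i
      = M ^ 2 * gapPMF n M i - 2 * M * (i * gapPMF n M i) + i ^ 2 * gapPMF n M i := by
    intro i hi
    rw [Nat.cast_sub (by simpa [Nat.lt_succ_iff] using hi)]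
    ring
  rw [sum_mul_dimPMF (fun x => (x : ℝ) ^ 2) hmn, sum_congr rfl hterm, sum_add_distrib,
    sum_sub_distrib, ← mul_sum, ← mul_sum, sum_range_gapPMF, mul_one, tsum_mul_gapPMF,
    tsum_mul_gapPMF]

end dimPMF

lemma hasSum_sq_mul_geometric_of_norm_lt_one {𝕜 : Type*} [NormedField 𝕜] [CompleteSpace 𝕜]
    {r : 𝕜} (hr : ‖r‖ < 1) :
    HasSum (fun n : ℕ => (n : 𝕜) ^ 2 * r ^ n) (r * (1 + r) / (1 - r) ^ 3) := by
  have h1r : 1 - r ≠ 0 := sub_ne_zero.2 fun h => by simp [← h] at hr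
  -- `n ^ 2 = 2 * C(n + 2, 2) - 3 * n - 2`
  have key := (((hasSum_choose_mul_geometric_of_norm_lt_one 2 hr).mul_left 2).sub
    ((hasSum_coe_mul_geometric_of_norm_lt_one hr).mul_left 3)).sub
    ((hasSum_geometric_of_norm_lt_one hr).mul_left 2)
  rw [show r * (1 + r) / (1 - r) ^ 3 = 2 * (1 / (1 - r) ^ (2 + 1)) - 3 * (r / (1 - r) ^ 2)
      - 2 * (1 - r)⁻¹ by field_simp; ring]
  refine key.congr_fun fun n => ?_
  have hC : ((n + 2).choose 2 : 𝕜) * 2 = (n + 2) * (n + 1) := by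
    have h : (n + 2).choose 2 * 2 = (n + 2) * (n + 1) := by
      simpa using (Nat.add_one_mul_choose_eq (n + 1) 1).symm
    simpa using congrArg (Nat.cast (R := 𝕜)) h
  linear_combination -r ^ n * hC

section limits

variable {μ : ℝ}

lemma norm_div_one_sub_lt_one (hμ0 : 0 ≤ μ) (hμ : μ < 1 / 2) : ‖μ / (1 - μ)‖ < 1 := by
  rw [Real.norm_of_nonneg (div_nonneg hμ0 (by linarith)), div_lt_one (by linarith)]
  linarith

lemma one_sub_div_one_sub (hμ1 : μ ≠ 1) : 1 - μ / (1 - μ) = (1 - 2 * μ) / (1 - μ) := by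
  have : 1 - μ ≠ 0 := sub_ne_zero.2 hμ1.symm
  field_simp
  ring

lemma tendsto_chooseRatio_factor (hμ0 : 0 < μ) (hμ1 : μ < 1) (j : ℕ) :
    Tendsto (fun p : ℕ × ℕ => ((p.2 - j : ℕ) : ℝ) / ((p.1 - p.2 + j + 1 : ℕ) : ℝ))
      (ratioAtTop μ) (𝓝 (μ / (1 - μ))) := by
  have ht := ratioAtTop.tendsto_inv_fst (ξ := μ)
  have hnum : Tendsto (fun p : ℕ × ℕ => μ - j * (p.1 : ℝ)⁻¹) (ratioAtTop μ) (𝓝 μ) := by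
    simpa using (tendsto_const_nhds (x := μ)).sub ((tendsto_const_nhds (x := (j : ℝ))).mul ht)
  have hden : Tendsto (fun p : ℕ × ℕ => 1 - μ + (j + 1) * (p.1 : ℝ)⁻¹) (ratioAtTop μ)
      (𝓝 (1 - μ)) := by
    simpa using (tendsto_const_nhds (x := 1 - μ)).add
      ((tendsto_const_nhds (x := (j + 1 : ℝ))).mul ht)
  refine (hnum.div hden (sub_pos.2 hμ1).ne').congr' ?_
  filter_upwards [ratioAtTop.eventually_snd_eq, (ratioAtTop.tendsto_snd hμ0).eventually
    (eventually_ge_atTop j), ratioAtTop.tendsto_fst.eventually (eventually_ge_atTop 1)]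
    with ⟨n, M⟩ hM hjM hn
  have hMn : M ≤ n := by exact_mod_cast hM.trans_le (mul_le_of_le_one_right n.cast_nonneg hμ1.le)
  have hn0 : (n : ℝ) ≠ 0 := by positivity
  dsimp only at hM hjM hn
  simp only [Pi.div_apply]
  push_cast [hjM, hMn]
  rw [hM]
  field_simp
  ring

lemma tendsto_chooseRatio (hμ0 : 0 < μ) (hμ1 : μ < 1) (i : ℕ) :
    Tendsto (fun p : ℕ × ℕ => chooseRatio p.1 p.2 i) (ratioAtTop μ) (𝓝 ((μ / (1 - μ)) ^ i)) := by
  have h := tendsto_finsetProd (range i) fun j _ => tendsto_chooseRatio_factor hμ0 hμ1 j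
  rwa [prod_const, card_range] at h

lemma tendsto_gapPMF (hμ0 : 0 < μ) (hμ1 : μ < 1) (i : ℕ) :
    Tendsto (fun p : ℕ × ℕ => gapPMF p.1 p.2 i) (ratioAtTop μ)
      (𝓝 ((μ / (1 - μ)) ^ i * ((1 - 2 * μ) / (1 - μ)))) := by
  rw [← one_sub_div_one_sub hμ1.ne, mul_one_sub, ← pow_succ]
  exact (tendsto_chooseRatio hμ0 hμ1 i).sub (tendsto_chooseRatio hμ0 hμ1 (i + 1))

lemma tendsto_tsum_pow_mul_gapPMF (hμ0 : 0 < μ) (hμ : μ < 1 / 2) (k : ℕ) :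
    Tendsto (fun p : ℕ × ℕ => ∑' i : ℕ, (i : ℝ) ^ k * gapPMF p.1 p.2 i) (ratioAtTop μ)
      (𝓝 (∑' i : ℕ, (i : ℝ) ^ k * ((μ / (1 - μ)) ^ i * ((1 - 2 * μ) / (1 - μ))))) := by
  have hr := norm_div_one_sub_lt_one hμ0.le hμ
  refine tendsto_tsum_of_dominated_convergence (summable_pow_mul_geometric_of_norm_lt_one k hr)
    (fun i => (tendsto_gapPMF hμ0 (by linarith) i).const_mul _) ?_
  filter_upwards [ratioAtTop.eventually_snd_eq] with p hp i
  rw [Real.norm_of_nonneg (mul_nonneg (by positivity) (gapPMF_nonneg hμ0.le hμ.le hp i))]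
  exact mul_le_mul_of_nonneg_left (gapPMF_le_pow hμ0.le (by linarith) hp i) (by positivity)

lemma tendsto_tsum_mul_gapPMF (hμ0 : 0 < μ) (hμ : μ < 1 / 2) :
    Tendsto (fun p : ℕ × ℕ => ∑' i : ℕ, (i : ℝ) * gapPMF p.1 p.2 i) (ratioAtTop μ)
      (𝓝 (μ / (1 - 2 * μ))) := by
  have hr := norm_div_one_sub_lt_one hμ0.le hμ
  convert tendsto_tsum_pow_mul_gapPMF hμ0 hμ 1 using 2
  · simp
  simp_rw [pow_one, ← mul_assoc]
  have h1 : 1 - μ ≠ 0 := by linarith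
  have h2 : 1 - 2 * μ ≠ 0 := by linarith
  rw [tsum_mul_right, tsum_coe_mul_geometric_of_norm_lt_one hr,
    one_sub_div_one_sub (by linarith)]
  field_simp

lemma tendsto_tsum_sq_mul_gapPMF (hμ0 : 0 < μ) (hμ : μ < 1 / 2) :
    Tendsto (fun p : ℕ × ℕ => ∑' i : ℕ, (i : ℝ) ^ 2 * gapPMF p.1 p.2 i) (ratioAtTop μ)
      (𝓝 (μ / (1 - 2 * μ) ^ 2)) := by
  have hr := norm_div_one_sub_lt_one hμ0.le hμ
  convert tendsto_tsum_pow_mul_gapPMF hμ0 hμ 2 using 2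
  simp_rw [← mul_assoc]
  have h1 : 1 - μ ≠ 0 := by linarith
  have h2 : 1 - 2 * μ ≠ 0 := by linarith
  rw [tsum_mul_right, (hasSum_sq_mul_geometric_of_norm_lt_one hr).tsum_eq,
    one_sub_div_one_sub (by linarith)]
  field_simp
  ring

end limits

section dimPMF_limits

variable {ξ μ : ℝ}

theorem tendsto_dimPMF_min_sub (hξ : ξ ≤ 1) (hμ : min ξ (1 - ξ) = μ) (hμ0 : 0 < μ)
    (hμ2 : μ < 1 / 2) (i : ℕ) :
    Tendsto (fun p : ℕ × ℕ => (dimPMF p.1 p.2 (min p.2 (p.1 - p.2) - i) : ℝ)) (ratioAtTop ξ)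
      (𝓝 ((μ / (1 - μ)) ^ i * ((1 - 2 * μ) / (1 - μ)))) := by
  have hmin := hμ ▸ ratioAtTop.tendsto_min_sub hξ
  refine ((tendsto_gapPMF hμ0 (by linarith) i).comp hmin).congr' ?_
  filter_upwards [ratioAtTop.eventually_snd_le hξ,
    hmin.eventually ((ratioAtTop.tendsto_snd hμ0).eventually (eventually_ge_atTop i))]
    with p hmn hi
  exact (dimPMF_min_sub hmn hi).symm

theorem tendsto_sum_mul_dimPMF_sub (hξ : ξ ≤ 1) (hμ : min ξ (1 - ξ) = μ) (hμ0 : 0 < μ)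
    (hμ2 : μ < 1 / 2) :
    Tendsto (fun p : ℕ × ℕ => ∑ x ∈ range (p.1 + 1), (x : ℝ) * (dimPMF p.1 p.2 x : ℝ) - p.1 * μ)
      (ratioAtTop ξ) (𝓝 (-(μ / (1 - 2 * μ)))) := by
  have hmin := hμ ▸ ratioAtTop.tendsto_min_sub hξ
  refine ((tendsto_tsum_mul_gapPMF hμ0 hμ2).neg.comp hmin).congr' ?_
  filter_upwards [ratioAtTop.eventually_snd_le hξ, hmin.eventually ratioAtTop.eventually_snd_eq]
    with p hmn hM
  simp only [Function.comp_apply] at hM ⊢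
  rw [sum_mul_dimPMF_eq hmn, hM]
  ring

theorem tendsto_variance_dimPMF (hξ : ξ ≤ 1) (hμ : min ξ (1 - ξ) = μ) (hμ0 : 0 < μ)
    (hμ2 : μ < 1 / 2) :
    Tendsto (fun p : ℕ × ℕ => ∑ x ∈ range (p.1 + 1), (x : ℝ) ^ 2 * (dimPMF p.1 p.2 x : ℝ)
        - (∑ x ∈ range (p.1 + 1), (x : ℝ) * (dimPMF p.1 p.2 x : ℝ)) ^ 2)
      (ratioAtTop ξ) (𝓝 (μ * (1 - μ) / (1 - 2 * μ) ^ 2)) := by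
  have hmin := hμ ▸ ratioAtTop.tendsto_min_sub hξ
  have h2 : 1 - 2 * μ ≠ 0 := by linarith
  have hlim := ((tendsto_tsum_sq_mul_gapPMF hμ0 hμ2).sub
    ((tendsto_tsum_mul_gapPMF hμ0 hμ2).pow 2)).comp hmin
  rw [show μ / (1 - 2 * μ) ^ 2 - (μ / (1 - 2 * μ)) ^ 2 = μ * (1 - μ) / (1 - 2 * μ) ^ 2 by
    field_simp] at hlim
  refine hlim.congr' ?_
  filter_upwards [ratioAtTop.eventually_snd_le hξ] with p hmn
  simp only [Function.comp_apply]
  rw [sum_mul_dimPMF_eq hmn, sum_sq_mul_dimPMF_eq hmn]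
  ring

end dimPMF_limits

/-- **Type II limit with `βδ = 0` and `ξ ≠ 1/2`**: with `μ = min(ξ, 1−ξ)`,
(i) `nμ − X` asymptotically obeys the geometric distribution with parameter
`μ/(1−μ)`, i.e. `p_n(nμ − i) → (μ/(1−μ))^i (1−2μ)/(1−μ)`;
(ii) `E[X] = nμ − μ/(1−2μ) + o(1)`;
(iii) `V[X] = μ(1−μ)/(1−2μ)² + o(1)`. -/
theorem typeII_bd_zero_geometric (ξ : ℚ) (h0 : 0 < ξ) (h1 : ξ < 1) (hne : ξ ≠ 1 / 2) :
    let μ : ℚ := min ξ (1 - ξ)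
    (∀ i : ℕ, ∀ ε : ℚ, 0 < ε → ∃ n₀ : ℕ, ∀ n : ℕ, n₀ ≤ n →
      ∀ m : ℕ, (m : ℚ) = (n : ℚ) * ξ →
        |dimPMF n m (min m (n - m) - i)
            - (μ / (1 - μ)) ^ i * ((1 - 2 * μ) / (1 - μ))| < ε)
    ∧ (∀ ε : ℚ, 0 < ε → ∃ n₀ : ℕ, ∀ n : ℕ, n₀ ≤ n →
      ∀ m : ℕ, (m : ℚ) = (n : ℚ) * ξ →
        |(∑ x ∈ Finset.range (n + 1), (x : ℚ) * dimPMF n m x)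
            - (n : ℚ) * μ + μ / (1 - 2 * μ)| < ε)
    ∧ (∀ ε : ℚ, 0 < ε → ∃ n₀ : ℕ, ∀ n : ℕ, n₀ ≤ n →
      ∀ m : ℕ, (m : ℚ) = (n : ℚ) * ξ →
        |(∑ x ∈ Finset.range (n + 1), (x : ℚ) ^ 2 * dimPMF n m x)
            - (∑ x ∈ Finset.range (n + 1), (x : ℚ) * dimPMF n m x) ^ 2
            - μ * (1 - μ) / (1 - 2 * μ) ^ 2| < ε) := by
  intro μ
  have hξ : (ξ : ℝ) ≤ 1 := by exact_mod_cast h1.le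
  have hμ : min (ξ : ℝ) (1 - ξ) = μ := by push_cast [μ]; rfl
  have hμ0 : 0 < μ := lt_min h0 (by linarith)
  have hμ2 : μ < 1 / 2 := by
    rcases hne.lt_or_gt with h | h
    · exact (min_le_left _ _).trans_lt h
    · exact (min_le_right _ _).trans_lt (by linarith)
  have hμ0' : (0 : ℝ) < μ := by exact_mod_cast hμ0
  have hμ2' : (μ : ℝ) < 1 / 2 := by simpa using (Rat.cast_lt (K := ℝ)).2 hμ2
  refine ⟨fun i ε hε => ratioAtTop.exists_abs_sub_lt ?_ hε, fun ε hε => ?_,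
    fun ε hε => ratioAtTop.exists_abs_sub_lt ?_ hε⟩
  · push_cast
    exact tendsto_dimPMF_min_sub hξ hμ hμ0' hμ2' i
  · simpa only [sub_neg_eq_add] using ratioAtTop.exists_abs_sub_lt
      (F := fun n m => ∑ x ∈ range (n + 1), (x : ℚ) * dimPMF n m x - n * μ)
      (L := -(μ / (1 - 2 * μ))) (by push_cast; exact tendsto_sum_mul_dimPMF_sub hξ hμ hμ0' hμ2') hε
  · push_cast
    exact tendsto_variance_dimPMF hξ hμ hμ0' hμ2'
end

section
/- (q-Racah presentation.) Let q be a real number with q > 0 and q ≠ 1, and let (n,m,k,l) be natural numbers with m ≤ n−m, k ≤ n, m+k−n ≤ l and l ≤ min(m,k); set M := m−l, N := n−m−k+l. Then for every integer x with 0 ≤ x ≤ m the following identity of real numbers holds: ∑_{i=0}^{min(M,N)} q^{i²} · [M choose i]_q · [N choose i]_q · [ ∑_{r=0}^{min(i,x)} q^r · ((q^{−i};q)_r·(q^{−x};q)_r·(q^{x−n−1};q)_r) / ((q^{−m};q)_r·(q^{m−n};q)_r·(q;q)_r) ] = [n−k choose m−l]_q · ∑_{r=0}^{min(x,M,N)}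 q^r · ((q^{−x};q)_r·(q^{x−n−1};q)_r·(q^{−M};q)_r·(q^{−N};q)_r) / ((q^{−m};q)_r·(q^{m−n};q)_r·(q^{−M−N};q)_r·(q;q)_r). -/
open Finset

/-- The `q`-Pochhammer symbol `(a;q)_r = ∏_{j=0}^{r−1} (1 − a qʲ)` in `ℝ`. -/
noncomputable def qPoch (q a : ℝ) (r : ℕ) : ℝ := ∏ j ∈ Finset.range r, (1 - a * q ^ j)

/-- The `q`-binomial (Gaussian binomial) coefficient
`[a choose b]_q = (q;q)_a / ((q;q)_b (q;q)_{a−b})` for `b ≤ a`, and `0` otherwise. -/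
noncomputable def qBinom (q : ℝ) (a b : ℕ) : ℝ :=
  if b ≤ a then qPoch q q a / (qPoch q q b * qPoch q q (a - b)) else 0

section
variable {q : ℝ} (hq0 : 0 < q) (hq1 : q ≠ 1)

lemma qPoch_succ (q a : ℝ) (r : ℕ) :
    qPoch q a (r + 1) = qPoch q a r * (1 - a * q ^ r) := Finset.prod_range_succ _ _

include hq0 hq1 in
lemma q_zpow_ne_one {z : ℤ} (hz : z ≠ 0) : q ^ z ≠ 1 := by
  intro h
  have hlog := congrArg Real.log h
  rw [Real.log_zpow, Real.log_one] at hlog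
  have h2 : Real.log q = 0 := by
    rcases mul_eq_zero.1 hlog with h' | h'
    · exact absurd (by exact_mod_cast h') hz
    · exact h'
  rcases Real.log_eq_zero.1 h2 with h' | h' | h'
  · linarith
  · exact hq1 h'
  · linarith

include hq0 hq1 in
lemma one_sub_qpow_ne_zero (s : ℕ) : (1 : ℝ) - q * q ^ s ≠ 0 := by
  have h : q * q ^ s = q ^ ((s : ℤ) + 1) := by
    rw [zpow_add₀ (ne_of_gt hq0), zpow_one, zpow_natCast]; ring
  rw [h]
  exact sub_ne_zero.2 (Ne.symm (q_zpow_ne_one hq0 hq1 (by omega)))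

include hq0 hq1 in
lemma qPoch_q_ne_zero (i : ℕ) : qPoch q q i ≠ 0 := by
  unfold qPoch
  exact Finset.prod_ne_zero_iff.2 fun j _ => one_sub_qpow_ne_zero hq0 hq1 j

lemma qBinom_eq_zero {a b : ℕ} (h : a < b) : qBinom q a b = 0 := if_neg (by omega)

include hq0 hq1 in
lemma qPascal (b j : ℕ) :
    qBinom q (b + 1) (j + 1) = qBinom q b (j + 1) + q ^ (b - j) * qBinom q b j := by
  have P := qPoch_q_ne_zero hq0 hq1
  rcases lt_trichotomy j b with h | h | h
  · obtain ⟨d, rfl⟩ : ∃ d, b = j + (d + 1) := ⟨b - j - 1, by omega⟩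
    rw [qBinom, qBinom, qBinom, if_pos (by omega), if_pos (by omega), if_pos (by omega)]
    have e1 : j + (d + 1) + 1 - (j + 1) = d + 1 := by omega
    have e2 : j + (d + 1) - (j + 1) = d := by omega
    have e3 : j + (d + 1) - j = d + 1 := by omega
    have e4 : j + (d + 1) + 1 = (j + (d + 1)) + 1 := by omega
    rw [e1, e2, e3, e4, qPoch_succ, qPoch_succ q q d, qPoch_succ q q j]
    have h1 := P (j + (d + 1))
    have h2 := P d
    have h3 := P j
    have h4 := one_sub_qpow_ne_zero hq0 hq1 d
    have h5 := one_sub_qpow_ne_zero hq0 hq1 j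
    field_simp
    ring
  · subst h
    rw [qBinom, qBinom, qBinom, if_pos (le_refl _), if_neg (by omega), if_pos (le_refl _)]
    rw [Nat.sub_self, Nat.sub_self, show qPoch q q 0 = 1 from rfl, mul_one, mul_one,
        div_self (P _), div_self (P _)]
    simp
  · rw [qBinom_eq_zero (by omega), qBinom_eq_zero (by omega), qBinom_eq_zero (by omega)]
    ring

include hq0 hq1 in
lemma qPascal' (a c : ℕ) :
    qBinom q (a + 1) (c + 1) = q ^ (c + 1) * qBinom q a (c + 1) + qBinom q a c := by
  have P := qPoch_q_ne_zero hq0 hq1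
  rcases lt_trichotomy c a with h | h | h
  · obtain ⟨d, rfl⟩ : ∃ d, a = c + (d + 1) := ⟨a - c - 1, by omega⟩
    rw [qBinom, qBinom, qBinom, if_pos (by omega), if_pos (by omega), if_pos (by omega)]
    have e1 : c + (d + 1) + 1 - (c + 1) = d + 1 := by omega
    have e2 : c + (d + 1) - (c + 1) = d := by omega
    have e3 : c + (d + 1) - c = d + 1 := by omega
    have e4 : c + (d + 1) + 1 = (c + (d + 1)) + 1 := by omega
    rw [e1, e2, e3, e4, qPoch_succ, qPoch_succ q q d, qPoch_succ q q c]
    have h1 := P (c + (d + 1))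
    have h2 := P d
    have h3 := P c
    have h4 := one_sub_qpow_ne_zero hq0 hq1 d
    have h5 := one_sub_qpow_ne_zero hq0 hq1 c
    field_simp
    ring
  · subst h
    rw [qBinom, qBinom, qBinom, if_pos (le_refl _), if_neg (by omega), if_pos (le_refl _)]
    rw [Nat.sub_self, Nat.sub_self, show qPoch q q 0 = 1 from rfl, mul_one, mul_one,
        div_self (P _), div_self (P _)]
    simp
  · rw [qBinom_eq_zero (by omega), qBinom_eq_zero (by omega), qBinom_eq_zero (by omega)]
    ring

include hq0 hq1 in
lemma qBinom_mul {a b : ℕ} (h : b ≤ a) :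
    qBinom q a b * qPoch q q b * qPoch q q (a - b) = qPoch q q a := by
  rw [qBinom, if_pos h]
  field_simp [qPoch_q_ne_zero hq0 hq1]

include hq0 hq1 in
lemma qBinom_one (a : ℕ) : qBinom q a 0 = 1 := by
  rw [qBinom, if_pos (Nat.zero_le a), Nat.sub_zero, show qPoch q q 0 = 1 from rfl, one_mul,
      div_self (qPoch_q_ne_zero hq0 hq1 a)]

include hq0 hq1 in
lemma qBinom_shift {N r : ℕ} (h : r ≤ N) (j : ℕ) :
    qBinom q N (r + j) * qPoch q q (r + j) * qPoch q q (N - r)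
      = qBinom q (N - r) j * qPoch q q N * qPoch q q j := by
  by_cases hj : r + j ≤ N
  · rw [qBinom, qBinom, if_pos hj, if_pos (by omega)]
    rw [show N - r - j = N - (r + j) from by omega]
    field_simp [qPoch_q_ne_zero hq0 hq1]
  · rw [qBinom_eq_zero (show N < r + j from by omega),
        qBinom_eq_zero (show N - r < j from by omega)]
    ring

include hq0 hq1 in
lemma qVdM (a b : ℕ) : ∀ r : ℕ,
    ∑ j ∈ Finset.range (b + 1), q ^ (j * (j + r)) * qBinom q a (j + r) * qBinom q b j
      = qBinom q (a + b) (b + r) := by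
  induction b with
  | zero =>
    intro r
    simp only [Finset.sum_range_one, Nat.zero_mul, pow_zero, one_mul, Nat.zero_add,
      Nat.add_zero, qBinom_one hq0 hq1]
    rw [mul_one]
  | succ b ih =>
    intro r
    rw [Finset.sum_range_succ']
    have hsplit : ∀ j ∈ Finset.range (b + 1),
        q ^ ((j+1) * ((j+1) + r)) * qBinom q a ((j+1) + r) * qBinom q (b+1) (j+1)
          = q ^ ((j+1) * ((j+1) + r)) * qBinom q a ((j+1) + r) * qBinom q b (j+1)
            + q ^ (b + r + 1) * (q ^ (j * (j + (r+1))) * qBinom q a (j + (r+1)) * qBinom q b j) := by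
      intro j hj
      have hjb : j ≤ b := by
        have := Finset.mem_range.1 hj; omega
      obtain ⟨d, rfl⟩ := Nat.exists_eq_add_of_le hjb
      rw [qPascal hq0 hq1 (j+d) j, show j + d - j = d from by omega,
        show (j+1) + r = j + (r+1) from by omega]
      have hpow : q ^ ((j+1) * (j + (r+1))) * q ^ d = q ^ (j + d + r + 1) * q ^ (j * (j + (r+1))) := by
        rw [← pow_add, ← pow_add]
        congr 1
        ring
      linear_combination (qBinom q a (j + (r+1)) * qBinom q (j+d) j) * hpow
    rw [Finset.sum_congr rfl hsplit, Finset.sum_add_distrib,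
      show qBinom q (b+1) 0 = qBinom q b 0 from by rw [qBinom_one hq0 hq1, qBinom_one hq0 hq1],
      add_right_comm,
      ← Finset.sum_range_succ' (fun j => q ^ (j * (j + r)) * qBinom q a (j + r) * qBinom q b j) (b+1),
      Finset.sum_range_succ, qBinom_eq_zero (show b < b + 1 from by omega), mul_zero, add_zero,
      ih r, ← Finset.mul_sum, ih (r+1),
      show a + (b+1) = (a + b) + 1 from by omega, show (b+1) + r = (b + r) + 1 from by omega,
      qPascal' hq0 hq1 (a+b) (b+r), show b + (r+1) = (b+r)+1 from by omega,
      show b + r + 1 = (b+r)+1 from by omega]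
    ring

def qTri (r : ℕ) : ℕ := ∑ j ∈ Finset.range r, j

lemma qTri_succ (r : ℕ) : qTri (r + 1) = qTri r + r := Finset.sum_range_succ _ _

include hq0 hq1 in
lemma qPoch_zpow_ne_zero {z : ℤ} {r : ℕ} (h : ∀ j : ℕ, j < r → z + j ≠ 0) :
    qPoch q (q ^ z) r ≠ 0 := by
  unfold qPoch
  refine Finset.prod_ne_zero_iff.2 fun j hj => ?_
  have hj' := Finset.mem_range.1 hj
  have : q ^ z * q ^ j = q ^ (z + j) := by
    rw [← zpow_natCast q j, ← zpow_add₀ (ne_of_gt hq0)]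
  rw [this]
  exact sub_ne_zero.2 (Ne.symm (q_zpow_ne_one hq0 hq1 (h j hj')))

include hq0 in
lemma qPoch_neg_eq_zero {i r : ℕ} (h : i < r) : qPoch q (q ^ (-(i : ℤ))) r = 0 := by
  unfold qPoch
  refine Finset.prod_eq_zero (Finset.mem_range.2 h) ?_
  rw [← zpow_natCast q i, ← zpow_add₀ (ne_of_gt hq0)]
  simp

include hq0 hq1 in
lemma qPoch_neg_mul (i : ℕ) : ∀ r : ℕ, r ≤ i →
    qPoch q (q ^ (-(i : ℤ))) r * qPoch q q (i - r)
      = (-1) ^ r * q ^ qTri r * q ^ (-((i : ℤ) * r)) * qPoch q q i := by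
  have hq := ne_of_gt hq0
  intro r
  induction r with
  | zero =>
    intro _
    simp [qTri, qPoch_succ, Finset.prod_range_zero, qPoch]
  | succ r ih =>
    intro h
    have IH := ih (by omega)
    refine mul_right_cancel₀ (one_sub_qpow_ne_zero hq0 hq1 (i - (r+1))) ?_
    have f1 : q ^ (-(i:ℤ)*r) * (q ^ (-(i:ℤ)) * q ^ (r:ℕ)) = q ^ (r:ℕ) * q ^ (-(i:ℤ)*(r+1)) := by
      rw [← zpow_natCast q r, ← zpow_add₀ hq, ← zpow_add₀ hq, ← zpow_add₀ hq]
      congr 1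
      ring
    have f2 : q ^ (r:ℕ) * (q ^ (-(i:ℤ)*(r+1)) * (q * q ^ ((i-(r+1)) : ℕ))) = q ^ (-(i:ℤ)*r) := by
      rw [show q * q ^ ((i-(r+1)) : ℕ) = q ^ (i - r : ℕ) from by
            rw [← pow_succ' q (i - (r+1)), show i - (r+1) + 1 = i - r from by omega],
          ← zpow_natCast q r, ← zpow_natCast q (i - r), ← zpow_add₀ hq, ← zpow_add₀ hq]
      congr 1
      rw [Nat.cast_sub (show r ≤ i from by omega)]
      ring
    calc qPoch q (q ^ (-(i:ℤ))) (r+1) * qPoch q q (i - (r+1)) * (1 - q * q ^ (i - (r+1)))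
        = (qPoch q (q ^ (-(i:ℤ))) r * qPoch q q (i - r)) * (1 - q ^ (-(i:ℤ)) * q ^ r) := by
          rw [show i - r = (i - (r+1)) + 1 from by omega, qPoch_succ, qPoch_succ]
          ring
      _ = ((-1)^r * q ^ qTri r * q ^ (-((i:ℤ)*r)) * qPoch q q i) * (1 - q ^ (-(i:ℤ)) * q ^ r) := by
          rw [IH]
      _ = (-1)^(r+1) * q ^ qTri (r+1) * q ^ (-((i:ℤ)*(r+1))) * qPoch q q i
            * (1 - q * q ^ (i - (r+1))) := by
          rw [qTri_succ, pow_add q (qTri r) r]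
          have e1 : (-((i:ℤ)*(r:ℕ))) = -(i:ℤ)*(r:ℕ) := by ring
          have e2 : (-((i:ℤ)*((r:ℕ)+1))) = -(i:ℤ)*((r:ℕ)+1) := by ring
          rw [e1, e2]
          linear_combination -(((-1)^r * q ^ qTri r * qPoch q q i) * f2)
            - ((-1)^r * q ^ qTri r * qPoch q q i) * f1

include hq0 hq1 in
lemma keyB {M N r : ℕ} (hrM : r ≤ M) (hrN : r ≤ N) :
    (∑ i ∈ Finset.range (min M N + 1),
        q ^ (i ^ 2) * qBinom q M i * qBinom q N i * qPoch q (q ^ (-(i : ℤ))) r)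
      * (qPoch q q (M - r) * qPoch q q (N - r))
    = (-1) ^ r * q ^ qTri r * qPoch q q (M + N - r) := by
  have hq := ne_of_gt hq0
  rw [Finset.sum_mul]
  rw [Finset.range_eq_Ico,
    ← Finset.sum_Ico_consecutive _ (Nat.zero_le r) (show r ≤ min M N + 1 from by omega)]
  have h0 : ∑ i ∈ Finset.Ico 0 r,
      (q ^ (i ^ 2) * qBinom q M i * qBinom q N i * qPoch q (q ^ (-(i : ℤ))) r)
        * (qPoch q q (M - r) * qPoch q q (N - r)) = 0 := by
    refine Finset.sum_eq_zero fun i hi => ?_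
    rw [qPoch_neg_eq_zero hq0 (Finset.mem_Ico.1 hi).2]
    ring
  rw [h0, zero_add, Finset.sum_Ico_eq_sum_range]
  have hterm : ∀ j ∈ Finset.range (min M N + 1 - r),
      (q ^ ((r + j) ^ 2) * qBinom q M (r + j) * qBinom q N (r + j) *
          qPoch q (q ^ (-((r + j : ℕ) : ℤ))) r) * (qPoch q q (M - r) * qPoch q q (N - r))
      = ((-1) ^ r * q ^ qTri r * qPoch q q N * qPoch q q (M - r)) *
          (q ^ (j * (j + r)) * qBinom q M (j + r) * qBinom q (N - r) j) := by
    intro j hj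
    refine mul_right_cancel₀ (qPoch_q_ne_zero hq0 hq1 j) ?_
    have hL := qPoch_neg_mul hq0 hq1 (r + j) r (by omega)
    rw [show r + j - r = j from by omega] at hL
    have hS := qBinom_shift hq0 hq1 hrN j
    have hpow : q ^ ((r + j) ^ 2) * q ^ (-(((r + j : ℕ) : ℤ) * (r : ℕ))) = q ^ (j * (j + r)) := by
      rw [← zpow_natCast q ((r + j) ^ 2), ← zpow_natCast q (j * (j + r)), ← zpow_add₀ hq]
      congr 1
      push_cast
      ring
    calc (q ^ ((r + j) ^ 2) * qBinom q M (r + j) * qBinom q N (r + j) *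
            qPoch q (q ^ (-((r + j : ℕ) : ℤ))) r) * (qPoch q q (M - r) * qPoch q q (N - r))
          * qPoch q q j
        = (q ^ ((r + j) ^ 2) * qBinom q M (r + j) * qPoch q q (M - r)) *
            ((qPoch q (q ^ (-((r + j : ℕ) : ℤ))) r * qPoch q q j) *
              (qBinom q N (r + j) * qPoch q q (N - r))) := by ring
      _ = (q ^ ((r + j) ^ 2) * qBinom q M (r + j) * qPoch q q (M - r)) *
            (((-1) ^ r * q ^ qTri r * q ^ (-(((r + j : ℕ) : ℤ) * (r : ℕ))) * qPoch q q (r + j)) *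
              (qBinom q N (r + j) * qPoch q q (N - r))) := by rw [hL]
      _ = (q ^ ((r + j) ^ 2) * q ^ (-(((r + j : ℕ) : ℤ) * (r : ℕ)))) *
            ((-1) ^ r * q ^ qTri r * qPoch q q (M - r)) * qBinom q M (r + j) *
            (qBinom q N (r + j) * qPoch q q (r + j) * qPoch q q (N - r)) := by ring
      _ = q ^ (j * (j + r)) * ((-1) ^ r * q ^ qTri r * qPoch q q (M - r)) * qBinom q M (r + j) *
            (qBinom q (N - r) j * qPoch q q N * qPoch q q j) := by rw [hpow, hS]
      _ = ((-1) ^ r * q ^ qTri r * qPoch q q N * qPoch q q (M - r)) *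
            (q ^ (j * (j + r)) * qBinom q M (j + r) * qBinom q (N - r) j) * qPoch q q j := by
          rw [Nat.add_comm j r]
          ring
  rw [Finset.sum_congr rfl hterm, ← Finset.mul_sum]
  have hext : ∑ j ∈ Finset.range (min M N + 1 - r),
        q ^ (j * (j + r)) * qBinom q M (j + r) * qBinom q (N - r) j
      = ∑ j ∈ Finset.range ((N - r) + 1),
        q ^ (j * (j + r)) * qBinom q M (j + r) * qBinom q (N - r) j := by
    refine Finset.sum_subset ?_ ?_
    · intro j hj
      simp only [Finset.mem_range] at *
      omega
    · intro j hj hj'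
      simp only [Finset.mem_range] at hj hj'
      rw [qBinom_eq_zero (show M < j + r from by omega)]
      ring
  rw [hext, qVdM hq0 hq1 M (N - r) r, show M + (N - r) = M + N - r from by omega,
    show (N - r) + r = N from by omega]
  have hBM := qBinom_mul hq0 hq1 (show N ≤ M + N - r from by omega)
  rw [show M + N - r - N = M - r from by omega] at hBM
  linear_combination ((-1) ^ r * q ^ qTri r) * hBM

include hq0 hq1 in
lemma keyFinal {M N r : ℕ} (hrM : r ≤ M) (hrN : r ≤ N) :
    ∑ i ∈ Finset.range (min M N + 1),
        q ^ (i ^ 2) * qBinom q M i * qBinom q N i * qPoch q (q ^ (-(i : ℤ))) r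
    = qBinom q (M + N) M *
        (qPoch q (q ^ (-(M : ℤ))) r * qPoch q (q ^ (-(N : ℤ))) r /
          qPoch q (q ^ (-((M : ℤ) + (N : ℤ)))) r) := by
  have hq := ne_of_gt hq0
  have hMN0 : qPoch q (q ^ (-((M : ℤ) + (N : ℤ)))) r ≠ 0 :=
    qPoch_zpow_ne_zero hq0 hq1 (fun j hj => by omega)
  have hcast : (-((M : ℤ) + (N : ℤ))) = -(((M + N : ℕ)) : ℤ) := by push_cast; ring
  refine mul_right_cancel₀ (mul_ne_zero (mul_ne_zero (qPoch_q_ne_zero hq0 hq1 (M - r))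
    (qPoch_q_ne_zero hq0 hq1 (N - r))) hMN0) ?_
  have hkB := keyB hq0 hq1 hrM hrN
  have hLM := qPoch_neg_mul hq0 hq1 M r hrM
  have hLN := qPoch_neg_mul hq0 hq1 N r hrN
  have hLMN := qPoch_neg_mul hq0 hq1 (M + N) r (by omega)
  have hBinom := qBinom_mul hq0 hq1 (show M ≤ M + N from by omega)
  rw [show M + N - M = N from by omega] at hBinom
  have hz : q ^ (-((M : ℤ) * (r : ℕ))) * q ^ (-((N : ℤ) * (r : ℕ)))
      = q ^ (-(((M + N : ℕ) : ℤ) * (r : ℕ))) := by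
    rw [← zpow_add₀ hq]
    congr 1
    push_cast
    ring
  have hR : qBinom q (M + N) M *
        (qPoch q (q ^ (-(M : ℤ))) r * qPoch q (q ^ (-(N : ℤ))) r /
          qPoch q (q ^ (-((M : ℤ) + (N : ℤ)))) r) *
        (qPoch q q (M - r) * qPoch q q (N - r) * qPoch q (q ^ (-((M : ℤ) + (N : ℤ)))) r)
      = qBinom q (M + N) M * (qPoch q (q ^ (-(M : ℤ))) r * qPoch q q (M - r)) *
          (qPoch q (q ^ (-(N : ℤ))) r * qPoch q q (N - r)) := by
    have key : ∀ A B C d1 d2 : ℝ, C ≠ 0 → A * (B / C) * (d1 * d2 * C) = A * B * d1 * d2 := by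
      intro A B C d1 d2 hC
      field_simp
    rw [key _ _ _ _ _ hMN0]
    ring
  rw [hR, hLM, hLN]
  calc (∑ i ∈ Finset.range (min M N + 1),
          q ^ (i ^ 2) * qBinom q M i * qBinom q N i * qPoch q (q ^ (-(i : ℤ))) r) *
        (qPoch q q (M - r) * qPoch q q (N - r) * qPoch q (q ^ (-((M : ℤ) + (N : ℤ)))) r)
      = ((∑ i ∈ Finset.range (min M N + 1),
          q ^ (i ^ 2) * qBinom q M i * qBinom q N i * qPoch q (q ^ (-(i : ℤ))) r) *
          (qPoch q q (M - r) * qPoch q q (N - r))) *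
          qPoch q (q ^ (-((M : ℤ) + (N : ℤ)))) r := by ring
    _ = ((-1) ^ r * q ^ qTri r * qPoch q q (M + N - r)) *
          qPoch q (q ^ (-((M : ℤ) + (N : ℤ)))) r := by rw [hkB]
    _ = ((-1) ^ r * q ^ qTri r) *
          (qPoch q (q ^ (-(((M + N : ℕ)) : ℤ))) r * qPoch q q (M + N - r)) := by
        rw [hcast]; ring
    _ = ((-1) ^ r * q ^ qTri r) *
          ((-1) ^ r * q ^ qTri r * q ^ (-(((M + N : ℕ) : ℤ) * (r : ℕ))) * qPoch q q (M + N)) := by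
        rw [hLMN]
    _ = qBinom q (M + N) M *
          ((-1) ^ r * q ^ qTri r * q ^ (-((M : ℤ) * (r : ℕ))) * qPoch q q M) *
          ((-1) ^ r * q ^ qTri r * q ^ (-((N : ℤ) * (r : ℕ))) * qPoch q q N) := by
        linear_combination (-(((-1) ^ r * q ^ qTri r) ^ 2 * qPoch q q (M + N))) * hz -
          (((-1) ^ r * q ^ qTri r) ^ 2 * q ^ (-((M : ℤ) * (r : ℕ))) *
            q ^ (-((N : ℤ) * (r : ℕ)))) * hBinom
end

/-- **`q`-Racah presentation**: with `M := m−l`, `N := n−m−k+l`, the summation of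
`q`-Hahn polynomial values (zonal spherical functions on the Gelfand pair
`(GL(n,F_q), P(m,n−m,F_q))`) equals a single `q`-Racah polynomial value:
`∑_{i=0}^{min(M,N)} q^{i²} [M,i]_q [N,i]_q ₃φ₂(q^{−i},q^{−x},q^{x−n−1};q^{−m},q^{m−n};q,q)
 = [n−k,m−l]_q ₄φ₃(q^{−x},q^{x−n−1},q^{−M},q^{−N};q^{−m},q^{m−n},q^{−M−N};q,q)`. -/
theorem qRacah_presentation (q : ℝ) (hq0 : 0 < q) (hq1 : q ≠ 1)
    (n m k l : ℕ) (hm : 2 * m ≤ n) (hk : k ≤ n) (hl : m + k ≤ n + l)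
    (hlm : l ≤ m) (hlk : l ≤ k) (x : ℕ) (hx : x ≤ m) :
    let M : ℕ := m - l
    let N : ℕ := n + l - m - k
    ∑ i ∈ Finset.range (min M N + 1),
      q ^ (i ^ 2) * qBinom q M i * qBinom q N i *
        ∑ r ∈ Finset.range (min i x + 1),
          q ^ r * qPoch q (q ^ (-(i : ℤ))) r * qPoch q (q ^ (-(x : ℤ))) r *
              qPoch q (q ^ ((x : ℤ) - n - 1)) r /
            (qPoch q (q ^ (-(m : ℤ))) r * qPoch q (q ^ ((m : ℤ) - n)) r * qPoch q q r)
    = qBinom q (n - k) (m - l) *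
        ∑ r ∈ Finset.range (min x (min M N) + 1),
          q ^ r * qPoch q (q ^ (-(x : ℤ))) r * qPoch q (q ^ ((x : ℤ) - n - 1)) r *
              qPoch q (q ^ (-(M : ℤ))) r * qPoch q (q ^ (-(N : ℤ))) r /
            (qPoch q (q ^ (-(m : ℤ))) r * qPoch q (q ^ ((m : ℤ) - n)) r *
              qPoch q (q ^ (-((M : ℤ) + (N : ℤ)))) r * qPoch q q r) := by
  intro M N
  have hM : M = m - l := rfl
  have hN : N = n + l - m - k := rfl
  have hinner : ∀ i ∈ Finset.range (min M N + 1),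
      (∑ r ∈ Finset.range (min i x + 1),
        q ^ r * qPoch q (q ^ (-(i : ℤ))) r * qPoch q (q ^ (-(x : ℤ))) r *
            qPoch q (q ^ ((x : ℤ) - n - 1)) r /
          (qPoch q (q ^ (-(m : ℤ))) r * qPoch q (q ^ ((m : ℤ) - n)) r * qPoch q q r))
      = ∑ r ∈ Finset.range (min x (min M N) + 1),
        q ^ r * qPoch q (q ^ (-(i : ℤ))) r * qPoch q (q ^ (-(x : ℤ))) r *
            qPoch q (q ^ ((x : ℤ) - n - 1)) r /
          (qPoch q (q ^ (-(m : ℤ))) r * qPoch q (q ^ ((m : ℤ) - n)) r * qPoch q q r) := by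
    intro i hi
    have hi' : i < min M N + 1 := Finset.mem_range.1 hi
    refine Finset.sum_subset ?_ ?_
    · intro r hr
      simp only [Finset.mem_range] at *
      omega
    · intro r hr hr'
      simp only [Finset.mem_range] at hr hr'
      rcases (show i < r ∨ x < r from by omega) with h | h
      · rw [qPoch_neg_eq_zero hq0 h]
        ring
      · rw [qPoch_neg_eq_zero hq0 (i := x) h]
        ring
  calc ∑ i ∈ Finset.range (min M N + 1),
      q ^ (i ^ 2) * qBinom q M i * qBinom q N i *
        ∑ r ∈ Finset.range (min i x + 1),
          q ^ r * qPoch q (q ^ (-(i : ℤ))) r * qPoch q (q ^ (-(x : ℤ))) r *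
              qPoch q (q ^ ((x : ℤ) - n - 1)) r /
            (qPoch q (q ^ (-(m : ℤ))) r * qPoch q (q ^ ((m : ℤ) - n)) r * qPoch q q r)
      = ∑ i ∈ Finset.range (min M N + 1),
        ∑ r ∈ Finset.range (min x (min M N) + 1),
          q ^ (i ^ 2) * qBinom q M i * qBinom q N i *
            (q ^ r * qPoch q (q ^ (-(i : ℤ))) r * qPoch q (q ^ (-(x : ℤ))) r *
                qPoch q (q ^ ((x : ℤ) - n - 1)) r /
              (qPoch q (q ^ (-(m : ℤ))) r * qPoch q (q ^ ((m : ℤ) - n)) r * qPoch q q r)) := by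
        refine Finset.sum_congr rfl fun i hi => ?_
        rw [hinner i hi, Finset.mul_sum]
    _ = ∑ r ∈ Finset.range (min x (min M N) + 1),
        ∑ i ∈ Finset.range (min M N + 1),
          q ^ (i ^ 2) * qBinom q M i * qBinom q N i *
            (q ^ r * qPoch q (q ^ (-(i : ℤ))) r * qPoch q (q ^ (-(x : ℤ))) r *
                qPoch q (q ^ ((x : ℤ) - n - 1)) r /
              (qPoch q (q ^ (-(m : ℤ))) r * qPoch q (q ^ ((m : ℤ) - n)) r * qPoch q q r)) :=
        Finset.sum_comm
    _ = qBinom q (n - k) (m - l) *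
        ∑ r ∈ Finset.range (min x (min M N) + 1),
          q ^ r * qPoch q (q ^ (-(x : ℤ))) r * qPoch q (q ^ ((x : ℤ) - n - 1)) r *
              qPoch q (q ^ (-(M : ℤ))) r * qPoch q (q ^ (-(N : ℤ))) r /
            (qPoch q (q ^ (-(m : ℤ))) r * qPoch q (q ^ ((m : ℤ) - n)) r *
              qPoch q (q ^ (-((M : ℤ) + (N : ℤ)))) r * qPoch q q r) := by
        rw [Finset.mul_sum]
        refine Finset.sum_congr rfl fun r hr => ?_
        have hr' : r < min x (min M N) + 1 := Finset.mem_range.1 hr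
        have hrM : r ≤ M := by omega
        have hrN : r ≤ N := by omega
        have hkey := keyFinal hq0 hq1 hrM hrN
        calc ∑ i ∈ Finset.range (min M N + 1),
            q ^ (i ^ 2) * qBinom q M i * qBinom q N i *
              (q ^ r * qPoch q (q ^ (-(i : ℤ))) r * qPoch q (q ^ (-(x : ℤ))) r *
                  qPoch q (q ^ ((x : ℤ) - n - 1)) r /
                (qPoch q (q ^ (-(m : ℤ))) r * qPoch q (q ^ ((m : ℤ) - n)) r * qPoch q q r))
            = ∑ i ∈ Finset.range (min M N + 1),
              (q ^ (i ^ 2) * qBinom q M i * qBinom q N i * qPoch q (q ^ (-(i : ℤ))) r) *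
                (q ^ r * qPoch q (q ^ (-(x : ℤ))) r * qPoch q (q ^ ((x : ℤ) - n - 1)) r /
                  (qPoch q (q ^ (-(m : ℤ))) r * qPoch q (q ^ ((m : ℤ) - n)) r * qPoch q q r)) :=
              Finset.sum_congr rfl fun i _ => by ring
          _ = (∑ i ∈ Finset.range (min M N + 1),
                q ^ (i ^ 2) * qBinom q M i * qBinom q N i * qPoch q (q ^ (-(i : ℤ))) r) *
                (q ^ r * qPoch q (q ^ (-(x : ℤ))) r * qPoch q (q ^ ((x : ℤ) - n - 1)) r /
                  (qPoch q (q ^ (-(m : ℤ))) r * qPoch q (q ^ ((m : ℤ) - n)) r * qPoch q q r)) := by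
              rw [← Finset.sum_mul]
          _ = (qBinom q (M + N) M *
                (qPoch q (q ^ (-(M : ℤ))) r * qPoch q (q ^ (-(N : ℤ))) r /
                  qPoch q (q ^ (-((M : ℤ) + (N : ℤ)))) r)) *
                (q ^ r * qPoch q (q ^ (-(x : ℤ))) r * qPoch q (q ^ ((x : ℤ) - n - 1)) r /
                  (qPoch q (q ^ (-(m : ℤ))) r * qPoch q (q ^ ((m : ℤ) - n)) r * qPoch q q r)) := by
              rw [hkey]
          _ = qBinom q (n - k) (m - l) *
              (q ^ r * qPoch q (q ^ (-(x : ℤ))) r * qPoch q (q ^ ((x : ℤ) - n - 1)) r *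
                  qPoch q (q ^ (-(M : ℤ))) r * qPoch q (q ^ (-(N : ℤ))) r /
                (qPoch q (q ^ (-(m : ℤ))) r * qPoch q (q ^ ((m : ℤ) - n)) r *
                  qPoch q (q ^ (-((M : ℤ) + (N : ℤ)))) r * qPoch q q r)) := by
              rw [show n - k = M + N from by omega, show m - l = M from hM.symm]
              ring
end
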